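/- arXiv:2404.06585 — 4 statements merged into one kernel-verified Lean document; each statement's English description precedes it below -/
import Mathlib

section
/- Let k ≥ 1 and σ ∈ S_k. Then T_σ is μ-integrable and its expectation satisfies E_μ[T_σ] = Σ_{n≥0} α_n(σ)/n! (in particular, this series converges). -/
open MeasureTheory ProbabilityTheory Real
open scoped ENNReal NNReal

noncomputable section

/-- The window of `x` of length `k` starting at position `i` (0-indexed) is a consecutive
occurrence of the pattern `σ`, i.e., its standardization is `σ` (relative orders agree). -/
def OccursAt {k : ℕ} (σ : Equiv.Perm (Fin k)) (x : ℕ → ℝ) (i : ℕ) : Prop :=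
  ∀ a b : Fin k, x (i + a) < x (i + b) ↔ σ a < σ b

/-- `hitTime σ x` is the number of draws until the first consecutive occurrence of `σ`,
i.e., the least `j ≥ k` such that the window `x_{j-k}, …, x_{j-1}` is an occurrence of `σ`. -/
def hitTime {k : ℕ} (σ : Equiv.Perm (Fin k)) (x : ℕ → ℝ) : ℕ :=
  sInf {j | k ≤ j ∧ OccursAt σ x (j - k)}

/-- `μ` is the law of an i.i.d. sequence of uniform random variables on `[0,1]`:
a probability measure on `ℕ → ℝ` whose finite-dimensional marginals are products of
the uniform measure on `[0,1]`. -/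
def IsIIDUniform (μ : Measure (ℕ → ℝ)) : Prop :=
  IsProbabilityMeasure μ ∧
  ∀ n : ℕ, μ.map (fun x (i : Fin n) => x i) =
    Measure.pi (fun _ : Fin n => (volume : Measure ℝ).restrict (Set.Icc 0 1))

/-- The pattern `σ ∈ S_k` occurs consecutively at position `i` (0-indexed) in the
permutation `p ∈ S_n`, written in one-line notation. -/
def PermOccursAt {k n : ℕ} (σ : Equiv.Perm (Fin k)) (p : Equiv.Perm (Fin n)) (i : ℕ) : Prop :=
  ∃ h : i + k ≤ n, ∀ a b : Fin k,
    p ⟨i + a, Nat.lt_of_lt_of_le (Nat.add_lt_add_left a.isLt i) h⟩ <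
      p ⟨i + b, Nat.lt_of_lt_of_le (Nat.add_lt_add_left b.isLt i) h⟩ ↔ σ a < σ b

/-- `avoidCount σ n` is the number `α_n(σ)` of permutations in `S_n` avoiding `σ`
as a consecutive pattern. -/
def avoidCount {k : ℕ} (σ : Equiv.Perm (Fin k)) (n : ℕ) : ℕ :=
  Nat.card {p : Equiv.Perm (Fin n) // ∀ i, ¬ PermOccursAt σ p i}

/-- Neither of the patterns `σ`, `τ` contains a consecutive occurrence of the other. -/
def Incomparable {k l : ℕ} (σ : Equiv.Perm (Fin k)) (τ : Equiv.Perm (Fin l)) : Prop :=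
  (∀ i, ¬ PermOccursAt σ τ i) ∧ (∀ i, ¬ PermOccursAt τ σ i)

namespace HitAux

open Set

/-- the uniform measure on [0,1] -/
def unif : Measure ℝ := (volume : Measure ℝ).restrict (Set.Icc 0 1)

instance : IsProbabilityMeasure unif := by
  constructor
  rw [unif, Measure.restrict_apply_univ, Real.volume_Icc]
  norm_num

instance : NullSingletonClass unif := by unfold unif; infer_instance

/-- product measure on `Fin n → ℝ` -/
def nu (n : ℕ) : Measure (Fin n → ℝ) := Measure.pi fun _ => unif

instance (n : ℕ) : IsProbabilityMeasure (nu n) := by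
  unfold nu; infer_instance

/-- order region of a permutation -/
def region {n : ℕ} (p : Equiv.Perm (Fin n)) : Set (Fin n → ℝ) :=
  {y | ∀ a b : Fin n, y a < y b ↔ p a < p b}

lemma measurableSet_iff_lt {α : Type*} [MeasurableSpace α] {u v : α → ℝ}
    (hu : Measurable u) (hv : Measurable v) (c : Prop) :
    MeasurableSet {y | u y < v y ↔ c} := by
  by_cases hc : c
  · simp only [hc, iff_true]; exact measurableSet_lt hu hv
  · simp only [hc, iff_false, ← Set.compl_setOf (fun y => u y < v y)]
    exact (measurableSet_lt hu hv).compl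

lemma measurableSet_region {n : ℕ} (p : Equiv.Perm (Fin n)) : MeasurableSet (region p) := by
  have : region p = ⋂ a, ⋂ b, {y : Fin n → ℝ | y a < y b ↔ p a < p b} := by
    ext y; simp [region]
  rw [this]
  exact MeasurableSet.iInter fun a => MeasurableSet.iInter fun b =>
    measurableSet_iff_lt (measurable_pi_apply a) (measurable_pi_apply b) _

lemma region_disjoint {n : ℕ} {p q : Equiv.Perm (Fin n)} (hpq : p ≠ q) :
    Disjoint (region p) (region q) := by
  rw [Set.disjoint_left]
  intro y hp hq
  apply hpq
  have key : ∀ u v : Fin n, u < v ↔ q (p.symm u) < q (p.symm v) := by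
    intro u v
    rw [← hq (p.symm u) (p.symm v), hp (p.symm u) (p.symm v)]
    simp
  have hsm : StrictMono (fun u => q (p.symm u)) := fun u v huv => (key u v).mp huv
  have hr : Set.range (fun u => q (p.symm u)) = Set.range (id : Fin n → Fin n) := by
    rw [Set.range_id]
    exact Set.range_eq_univ.mpr fun u => ⟨p (q.symm u), by simp⟩
  have hid : (fun u => q (p.symm u)) = id := (hsm.range_inj strictMono_id).mp hr
  ext a
  have := congrFun hid (p a)
  simp at this
  omega

lemma diag_null {n : ℕ} {a b : Fin n} (hab : a ≠ b) :
    nu n {y | y a = y b} = 0 := by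
  cases n with
  | zero => exact a.elim0
  | succ m =>
    obtain ⟨j, hj⟩ := Fin.exists_succAbove_eq (Ne.symm hab)
    have hmp : MeasurePreserving (MeasurableEquiv.piFinSuccAbove (fun _ => ℝ) a)
        (nu (m+1)) (unif.prod (nu m)) := measurePreserving_piFinSuccAbove (fun _ => unif) a
    have hms : MeasurableSet {p : ℝ × (Fin m → ℝ) | p.1 = p.2 j} :=
      measurableSet_eq_fun measurable_fst ((measurable_pi_apply j).comp measurable_snd)
    have hset : {y : Fin (m+1) → ℝ | y a = y b} =
        (MeasurableEquiv.piFinSuccAbove (fun _ => ℝ) a) ⁻¹' {p : ℝ × (Fin m → ℝ) | p.1 = p.2 j} := by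
      ext y
      simp [MeasurableEquiv.piFinSuccAbove_apply, Fin.removeNth, hj]
    rw [hset, hmp.measure_preimage hms.nullMeasurableSet]
    rw [Measure.prod_apply hms]
    have : ∀ t : ℝ, (nu m) (Prod.mk t ⁻¹' {p : ℝ × (Fin m → ℝ) | p.1 = p.2 j}) = 0 := by
      intro t
      have : (Prod.mk t ⁻¹' {p : ℝ × (Fin m → ℝ) | p.1 = p.2 j}) = {z : Fin m → ℝ | z j = t} := by
        ext z; simp [eq_comm]
      rw [this]
      exact Measure.pi_hyperplane (fun _ : Fin m => unif) j t
    simp only [this]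
    simp

lemma region_compl_null (n : ℕ) : nu n ((⋃ p : Equiv.Perm (Fin n), region p)ᶜ) = 0 := by
  have hsub : (⋃ p : Equiv.Perm (Fin n), region p)ᶜ ⊆
      ⋃ (q : Fin n × Fin n), ⋃ (_ : q.1 ≠ q.2), {y : Fin n → ℝ | y q.1 = y q.2} := by
    intro y hy
    simp only [Set.mem_compl_iff, Set.mem_iUnion] at hy ⊢
    by_contra hcon
    push_neg at hcon
    apply hy
    have hinj : Function.Injective y := by
      intro u v huv
      by_contra h
      exact hcon (u, v) h huv
    have hmono : StrictMono (y ∘ Tuple.sort y) :=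
      (Tuple.monotone_sort y).strictMono_of_injective
        (hinj.comp (Tuple.sort y).injective)
    refine ⟨(Tuple.sort y)⁻¹, fun u v => ?_⟩
    have h1 : ∀ w, y w = (y ∘ Tuple.sort y) ((Tuple.sort y)⁻¹ w) := by
      intro w; simp
    rw [h1 u, h1 v, hmono.lt_iff_lt]
  refine measure_mono_null hsub (measure_iUnion_null fun q => measure_iUnion_null fun h => diag_null h)

lemma region_measure_eq_one {n : ℕ} (p : Equiv.Perm (Fin n)) :
    nu n (region p) = nu n (region (1 : Equiv.Perm (Fin n))) := by
  have hmp : MeasurePreserving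
      (MeasurableEquiv.piCongrLeft (fun _ => ℝ) (p : Fin n ≃ Fin n)).symm (nu n) (nu n) :=
    (measurePreserving_piCongrLeft (fun _ : Fin n => unif) (p : Fin n ≃ Fin n)).symm
      (MeasurableEquiv.piCongrLeft (fun _ => ℝ) (p : Fin n ≃ Fin n))
  have happ : ∀ (y : Fin n → ℝ) (s : Fin n),
      (MeasurableEquiv.piCongrLeft (fun _ => ℝ) (p : Fin n ≃ Fin n)).symm y s = y (p s) := by
    intro y s
    rfl
  have hset : (MeasurableEquiv.piCongrLeft (fun _ => ℝ) (p : Fin n ≃ Fin n)).symm ⁻¹' region p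
      = region (1 : Equiv.Perm (Fin n)) := by
    ext y
    simp only [Set.mem_preimage, region, Set.mem_setOf_eq, happ, Equiv.Perm.one_apply]
    constructor
    · intro h u v
      have := h (p.symm u) (p.symm v)
      simpa using this
    · intro h a b
      rw [h (p a) (p b)]
  rw [← hset, hmp.measure_preimage (measurableSet_region _).nullMeasurableSet]

lemma region_measure {n : ℕ} (p : Equiv.Perm (Fin n)) :
    nu n (region p) = ((n.factorial : ℝ≥0∞))⁻¹ := by
  have hU : nu n (⋃ p : Equiv.Perm (Fin n), region p) = 1 := by
    have hms : MeasurableSet (⋃ p : Equiv.Perm (Fin n), region p) :=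
      MeasurableSet.iUnion fun p => measurableSet_region p
    have h2 := measure_add_measure_compl (μ := nu n) hms
    rw [region_compl_null, add_zero, measure_univ] at h2
    exact h2
  have hsum : (∑' q : Equiv.Perm (Fin n), nu n (region q)) = 1 := by
    rw [← measure_iUnion ?_ fun q => measurableSet_region q, hU]
    intro q q' hqq'
    exact region_disjoint hqq'
  rw [tsum_fintype] at hsum
  have hconst : ∀ q : Equiv.Perm (Fin n), nu n (region q) = nu n (region (1 : Equiv.Perm (Fin n))) :=
    region_measure_eq_one
  simp_rw [Finset.sum_congr rfl (fun q _ => hconst q), Finset.sum_const, Finset.card_univ,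
    Fintype.card_perm, Fintype.card_fin] at hsum
  have hne : (n.factorial : ℝ≥0∞) ≠ 0 := Nat.cast_ne_zero.mpr n.factorial_ne_zero
  have hnt : (n.factorial : ℝ≥0∞) ≠ ⊤ := ENNReal.natCast_ne_top _
  rw [hconst p]
  rw [nsmul_eq_mul] at hsum
  calc nu n (region (1 : Equiv.Perm (Fin n)))
      = (n.factorial : ℝ≥0∞)⁻¹ * ((n.factorial : ℝ≥0∞) * nu n (region (1 : Equiv.Perm (Fin n)))) := by
        rw [← mul_assoc, ENNReal.inv_mul_cancel hne hnt, one_mul]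
    _ = (n.factorial : ℝ≥0∞)⁻¹ := by rw [hsum, mul_one]

variable {k : ℕ} (σ : Equiv.Perm (Fin k))

/-- occurrence of `σ` in the window of length `k` at position `i` of `y : Fin n → ℝ` -/
def winOcc (n i : ℕ) (h : i + k ≤ n) (y : Fin n → ℝ) : Prop :=
  ∀ a b : Fin k, y ⟨i + a, Nat.lt_of_lt_of_le (Nat.add_lt_add_left a.isLt i) h⟩ <
    y ⟨i + b, Nat.lt_of_lt_of_le (Nat.add_lt_add_left b.isLt i) h⟩ ↔ σ a < σ b

def AvoidFin (n : ℕ) : Set (Fin n → ℝ) := {y | ∀ (i : ℕ) (h : i + k ≤ n), ¬ winOcc σ n i h y}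

def AvoidSeq (n : ℕ) : Set (ℕ → ℝ) := {x | ∀ i : ℕ, i + k ≤ n → ¬ OccursAt σ x i}

lemma measurableSet_avoidFin (n : ℕ) : MeasurableSet (AvoidFin σ n) := by
  have : AvoidFin σ n = ⋂ (i : ℕ), ⋂ (h : i + k ≤ n),
      (⋂ (a : Fin k), ⋂ (b : Fin k), {y : Fin n → ℝ |
        y ⟨i + a, Nat.lt_of_lt_of_le (Nat.add_lt_add_left a.isLt i) h⟩ <
        y ⟨i + b, Nat.lt_of_lt_of_le (Nat.add_lt_add_left b.isLt i) h⟩ ↔ σ a < σ b})ᶜ := by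
    ext y
    simp only [AvoidFin, Set.mem_setOf_eq, Set.mem_iInter, Set.mem_compl_iff, winOcc]
  rw [this]
  refine MeasurableSet.iInter fun i => MeasurableSet.iInter fun h => MeasurableSet.compl ?_
  exact MeasurableSet.iInter fun a => MeasurableSet.iInter fun b =>
    measurableSet_iff_lt (measurable_pi_apply _) (measurable_pi_apply _) _

lemma measurableSet_occursAt (i : ℕ) : MeasurableSet {x : ℕ → ℝ | OccursAt σ x i} := by
  have : {x : ℕ → ℝ | OccursAt σ x i} =
      ⋂ (a : Fin k), ⋂ (b : Fin k), {x : ℕ → ℝ | x (i + a) < x (i + b) ↔ σ a < σ b} := by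
    ext x; simp [OccursAt]
  rw [this]
  exact MeasurableSet.iInter fun a => MeasurableSet.iInter fun b =>
    measurableSet_iff_lt (measurable_pi_apply _) (measurable_pi_apply _) _

lemma measurableSet_avoidSeq (n : ℕ) : MeasurableSet (AvoidSeq σ n) := by
  have : AvoidSeq σ n = ⋂ (i : ℕ), ⋂ (_ : i + k ≤ n), {x : ℕ → ℝ | OccursAt σ x i}ᶜ := by
    ext x; simp [AvoidSeq]
  rw [this]
  exact MeasurableSet.iInter fun i => MeasurableSet.iInter fun h =>
    (measurableSet_occursAt σ i).compl

lemma avoidFin_region {n : ℕ} {p : Equiv.Perm (Fin n)} {y : Fin n → ℝ} (hy : y ∈ region p) :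
    y ∈ AvoidFin σ n ↔ ∀ i, ¬ PermOccursAt σ p i := by
  constructor
  · rintro h i ⟨hin, hcond⟩
    exact h i hin fun a b => (hy _ _).trans (hcond a b)
  · intro h i hin hw
    exact h i ⟨hin, fun a b => ((hy _ _).symm.trans (hw a b))⟩

lemma avoidCount_eq_card (n : ℕ) [DecidablePred fun p : Equiv.Perm (Fin n) => ∀ i, ¬ PermOccursAt σ p i] :
    avoidCount σ n =
      (Finset.univ.filter fun p : Equiv.Perm (Fin n) => ∀ i, ¬ PermOccursAt σ p i).card := by
  rw [avoidCount, Nat.card_eq_fintype_card, Fintype.card_subtype]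

lemma nu_avoidFin (n : ℕ) :
    nu n (AvoidFin σ n) = (avoidCount σ n : ℝ≥0∞) * ((n.factorial : ℝ≥0∞))⁻¹ := by
  classical
  have hcompl := region_compl_null n
  have h1 : nu n (AvoidFin σ n) = nu n (AvoidFin σ n ∩ ⋃ p : Equiv.Perm (Fin n), region p) :=
    (measure_inter_conull hcompl).symm
  have h2 : AvoidFin σ n ∩ (⋃ p : Equiv.Perm (Fin n), region p) =
      ⋃ p : Equiv.Perm (Fin n), AvoidFin σ n ∩ region p := by
    rw [Set.inter_iUnion]
  have h3 : ∀ p : Equiv.Perm (Fin n), AvoidFin σ n ∩ region p =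
      if (∀ i, ¬ PermOccursAt σ p i) then region p else ∅ := by
    intro p
    by_cases hp : ∀ i, ¬ PermOccursAt σ p i
    · rw [if_pos hp]
      ext y
      simp only [Set.mem_inter_iff, and_iff_right_iff_imp]
      intro hy
      exact (avoidFin_region σ hy).mpr hp
    · rw [if_neg hp]
      ext y
      simp only [Set.mem_inter_iff, Set.mem_empty_iff_false, iff_false, not_and]
      intro hA hR
      exact hp ((avoidFin_region σ hR).mp hA)
  rw [h1, h2, measure_iUnion ?_ ?_]
  · rw [tsum_fintype]
    have : ∀ p : Equiv.Perm (Fin n), nu n (AvoidFin σ n ∩ region p) =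
        if (∀ i, ¬ PermOccursAt σ p i) then ((n.factorial : ℝ≥0∞))⁻¹ else 0 := by
      intro p
      rw [h3 p]
      by_cases hp : ∀ i, ¬ PermOccursAt σ p i
      · rw [if_pos hp, if_pos hp, region_measure]
      · rw [if_neg hp, if_neg hp, measure_empty]
    rw [Finset.sum_congr rfl fun p _ => this p, ← Finset.sum_filter, Finset.sum_const,
      nsmul_eq_mul, avoidCount_eq_card]
  · intro p q hpq
    exact (region_disjoint hpq).mono Set.inter_subset_right Set.inter_subset_right
  · exact fun p => (measurableSet_avoidFin σ n).inter (measurableSet_region p)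

lemma measurable_res (n : ℕ) : Measurable (fun (x : ℕ → ℝ) (i : Fin n) => x i) :=
  measurable_pi_lambda _ fun i => measurable_pi_apply _

lemma res_preimage (n : ℕ) :
    (fun (x : ℕ → ℝ) (i : Fin n) => x (i : ℕ)) ⁻¹' (AvoidFin σ n) = AvoidSeq σ n := by
  ext x
  simp only [Set.mem_preimage, AvoidFin, AvoidSeq, Set.mem_setOf_eq, winOcc, OccursAt]

lemma mu_avoidSeq {μ : Measure (ℕ → ℝ)} (hμ : IsIIDUniform μ) (n : ℕ) :
    μ (AvoidSeq σ n) = nu n (AvoidFin σ n) := by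
  have := hμ.2 n
  rw [show (Measure.pi (fun _ : Fin n => (volume : Measure ℝ).restrict (Set.Icc 0 1))) = nu n from rfl] at this
  rw [← this, Measure.map_apply (measurable_res n) (measurableSet_avoidFin σ n), res_preimage]

lemma nu_step (m : ℕ) :
    nu (m + k) (AvoidFin σ (m + k)) ≤ nu m (AvoidFin σ m) * nu k ((region σ)ᶜ) := by
  set F := ((MeasurableEquiv.piCongrLeft (fun _ => ℝ)
      (finSumFinEquiv : Fin m ⊕ Fin k ≃ Fin (m + k))).symm.trans
      (MeasurableEquiv.sumPiEquivProdPi (fun _ : Fin m ⊕ Fin k => ℝ))) with hF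
  have hmp : MeasurePreserving F (nu (m + k)) ((nu m).prod (nu k)) := by
    refine MeasurePreserving.trans ?_ (measurePreserving_sumPiEquivProdPi (fun _ => unif))
    exact (measurePreserving_piCongrLeft (fun _ : Fin (m + k) => unif) finSumFinEquiv).symm _
  have hsub : AvoidFin σ (m + k) ⊆ F ⁻¹' ((AvoidFin σ m) ×ˢ (region σ)ᶜ) := by
    intro y hy
    have hF1 : ∀ i : Fin m, (F y).1 i = y (Fin.castAdd k i) := fun _ => rfl
    have hF2 : ∀ j : Fin k, (F y).2 j = y (Fin.natAdd m j) := fun _ => rfl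
    constructor
    · intro i hik hw
      refine hy i (hik.trans (Nat.le_add_right m k)) ?_
      intro a b
      have := hw a b
      rw [hF1, hF1] at this
      convert this using 2 <;> rfl
    · intro hreg
      refine hy m le_rfl ?_
      intro a b
      have := hreg a b
      rw [hF2, hF2] at this
      convert this using 2 <;> rfl
  calc nu (m + k) (AvoidFin σ (m + k)) ≤ nu (m + k) (F ⁻¹' ((AvoidFin σ m) ×ˢ (region σ)ᶜ)) :=
        measure_mono hsub
    _ = ((nu m).prod (nu k)) ((AvoidFin σ m) ×ˢ (region σ)ᶜ) :=
        hmp.measure_preimage (((measurableSet_avoidFin σ m).prod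
          (measurableSet_region σ).compl)).nullMeasurableSet
    _ = nu m (AvoidFin σ m) * nu k ((region σ)ᶜ) := by
        rw [Measure.prod_prod]

lemma nu_region_compl : nu k ((region σ)ᶜ) = 1 - ((k.factorial : ℝ≥0∞))⁻¹ := by
  rw [measure_compl (measurableSet_region σ) (measure_ne_top _ _), measure_univ, region_measure]

lemma avoidSeq_antitone {n n' : ℕ} (h : n ≤ n') : AvoidSeq σ n' ⊆ AvoidSeq σ n :=
  fun x hx i hik => hx i (hik.trans h)

lemma mu_avoidSeq_le {μ : Measure (ℕ → ℝ)} (hμ : IsIIDUniform μ) (hk : 1 ≤ k) (n : ℕ) :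
    μ (AvoidSeq σ n) ≤ (1 - ((k.factorial : ℝ≥0∞))⁻¹) ^ (n / k) := by
  haveI := hμ.1
  have key : ∀ q : ℕ, μ (AvoidSeq σ (q * k)) ≤ (1 - ((k.factorial : ℝ≥0∞))⁻¹) ^ q := by
    intro q
    induction q with
    | zero => simpa using prob_le_one
    | succ q ih =>
      have : (q + 1) * k = q * k + k := by ring
      rw [this, mu_avoidSeq σ hμ]
      calc nu (q * k + k) (AvoidFin σ (q * k + k))
          ≤ nu (q * k) (AvoidFin σ (q * k)) * nu k ((region σ)ᶜ) := nu_step σ _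
        _ = μ (AvoidSeq σ (q * k)) * (1 - ((k.factorial : ℝ≥0∞))⁻¹) := by
            rw [mu_avoidSeq σ hμ, nu_region_compl]
        _ ≤ (1 - ((k.factorial : ℝ≥0∞))⁻¹) ^ q * (1 - ((k.factorial : ℝ≥0∞))⁻¹) :=
            mul_le_mul_left ih _
        _ = (1 - ((k.factorial : ℝ≥0∞))⁻¹) ^ (q + 1) := by rw [pow_succ]
  calc μ (AvoidSeq σ n) ≤ μ (AvoidSeq σ (n / k * k)) :=
        measure_mono (avoidSeq_antitone σ (Nat.div_mul_le_self n k))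
    _ ≤ (1 - ((k.factorial : ℝ≥0∞))⁻¹) ^ (n / k) := key _

def occSet (x : ℕ → ℝ) : Set ℕ := {j | k ≤ j ∧ OccursAt σ x (j - k)}

lemma hitTime_eq (x : ℕ → ℝ) : hitTime σ x = sInf (occSet σ x) := rfl

lemma avoidSeq_iff (n : ℕ) (x : ℕ → ℝ) :
    x ∈ AvoidSeq σ n ↔ ∀ j ∈ occSet σ x, n < j := by
  constructor
  · intro hx j hj
    by_contra h
    push_neg at h
    obtain ⟨hkj, hocc⟩ := hj
    exact hx (j - k) (by omega) hocc
  · intro h i hik hocc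
    have hmem : i + k ∈ occSet σ x :=
      ⟨Nat.le_add_left k i, by simpa [Nat.add_sub_cancel] using hocc⟩
    have := h _ hmem
    omega

lemma lt_hitTime_iff {x : ℕ → ℝ} (hne : (occSet σ x).Nonempty) (n : ℕ) :
    n < hitTime σ x ↔ x ∈ AvoidSeq σ n := by
  rw [avoidSeq_iff, hitTime_eq]
  constructor
  · intro h j hj
    exact lt_of_lt_of_le h (Nat.sInf_le hj)
  · intro h
    exact h _ (Nat.sInf_mem hne)

lemma measurableSet_nonempty : MeasurableSet {x : ℕ → ℝ | (occSet σ x).Nonempty} := by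
  have : {x : ℕ → ℝ | (occSet σ x).Nonempty} =
      ⋃ j : ℕ, {x : ℕ → ℝ | k ≤ j ∧ OccursAt σ x (j - k)} := by
    ext x
    simp [occSet, Set.Nonempty]
  rw [this]
  refine MeasurableSet.iUnion fun j => ?_
  by_cases hj : k ≤ j
  · have : {x : ℕ → ℝ | k ≤ j ∧ OccursAt σ x (j - k)} = {x | OccursAt σ x (j - k)} := by
      ext x; simp [hj]
    rw [this]
    exact measurableSet_occursAt σ _
  · have : {x : ℕ → ℝ | k ≤ j ∧ OccursAt σ x (j - k)} = ∅ := by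
      ext x; simp [hj]
    rw [this]
    exact MeasurableSet.empty

lemma lt_hitTime_set_eq (n : ℕ) :
    {x : ℕ → ℝ | n < hitTime σ x} = AvoidSeq σ n ∩ {x | (occSet σ x).Nonempty} := by
  ext x
  simp only [Set.mem_setOf_eq, Set.mem_inter_iff]
  by_cases hne : (occSet σ x).Nonempty
  · rw [lt_hitTime_iff σ hne]
    simp [hne]
  · rw [Set.not_nonempty_iff_eq_empty] at hne
    rw [hitTime_eq, hne]
    simp [Nat.sInf_empty]

lemma measurableSet_lt_hitTime (n : ℕ) : MeasurableSet {x : ℕ → ℝ | n < hitTime σ x} := by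
  rw [lt_hitTime_set_eq]
  exact (measurableSet_avoidSeq σ n).inter (measurableSet_nonempty σ)

lemma measurable_hitTime : Measurable (hitTime σ) := by
  apply measurable_to_countable'
  intro m
  cases m with
  | zero =>
    have : hitTime σ ⁻¹' {0} = {x : ℕ → ℝ | 0 < hitTime σ x}ᶜ := by
      ext x; simp [Nat.pos_iff_ne_zero]
    rw [this]
    exact (measurableSet_lt_hitTime σ 0).compl
  | succ m =>
    have : hitTime σ ⁻¹' {m + 1} =
        {x : ℕ → ℝ | m < hitTime σ x} ∩ {x : ℕ → ℝ | m + 1 < hitTime σ x}ᶜ := by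
      ext x
      simp only [Set.mem_preimage, Set.mem_singleton_iff, Set.mem_inter_iff, Set.mem_compl_iff,
        Set.mem_setOf_eq]
      omega
    rw [this]
    exact (measurableSet_lt_hitTime σ m).inter (measurableSet_lt_hitTime σ (m + 1)).compl

lemma compl_nonempty_subset (n : ℕ) :
    {x : ℕ → ℝ | (occSet σ x).Nonempty}ᶜ ⊆ AvoidSeq σ n := by
  intro x hx
  rw [Set.mem_compl_iff, Set.mem_setOf_eq, Set.not_nonempty_iff_eq_empty] at hx
  rw [avoidSeq_iff]
  intro j hj
  rw [hx] at hj
  exact absurd hj (Set.notMem_empty j)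

lemma mu_nonempty_compl {μ : Measure (ℕ → ℝ)} (hμ : IsIIDUniform μ) (hk : 1 ≤ k) :
    μ {x : ℕ → ℝ | (occSet σ x).Nonempty}ᶜ = 0 := by
  have hr1 : (1 : ℝ≥0∞) - ((k.factorial : ℝ≥0∞))⁻¹ < 1 :=
    ENNReal.sub_lt_self ENNReal.one_ne_top one_ne_zero
      (ENNReal.inv_ne_zero.mpr (ENNReal.natCast_ne_top _))
  have hb : ∀ q : ℕ, μ {x : ℕ → ℝ | (occSet σ x).Nonempty}ᶜ ≤
      ((1 : ℝ≥0∞) - ((k.factorial : ℝ≥0∞))⁻¹) ^ q := by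
    intro q
    calc μ {x : ℕ → ℝ | (occSet σ x).Nonempty}ᶜ ≤ μ (AvoidSeq σ (q * k)) :=
          measure_mono (compl_nonempty_subset σ _)
      _ ≤ ((1 : ℝ≥0∞) - ((k.factorial : ℝ≥0∞))⁻¹) ^ (q * k / k) := mu_avoidSeq_le σ hμ hk _
      _ = ((1 : ℝ≥0∞) - ((k.factorial : ℝ≥0∞))⁻¹) ^ q := by
          rw [Nat.mul_div_cancel q (by omega : 0 < k)]
  have htend := ENNReal.tendsto_pow_atTop_nhds_zero_of_lt_one hr1
  have := ge_of_tendsto htend (Filter.Eventually.of_forall hb)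
  exact le_antisymm this zero_le

lemma mu_lt_hitTime {μ : Measure (ℕ → ℝ)} (hμ : IsIIDUniform μ) (hk : 1 ≤ k) (n : ℕ) :
    μ {x : ℕ → ℝ | n < hitTime σ x} = μ (AvoidSeq σ n) := by
  rw [lt_hitTime_set_eq]
  exact measure_inter_conull (mu_nonempty_compl σ hμ hk)

lemma tsum_bound (hk : 1 ≤ k) :
    ∑' n : ℕ, ((1 : ℝ≥0∞) - ((k.factorial : ℝ≥0∞))⁻¹) ^ (n / k) ≠ ⊤ := by
  haveI : NeZero k := ⟨by omega⟩
  set r : ℝ≥0∞ := (1 : ℝ≥0∞) - ((k.factorial : ℝ≥0∞))⁻¹ with hrdef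
  rw [← Equiv.tsum_eq (Nat.divModEquiv k).symm (fun n => r ^ (n / k))]
  have hq : ∀ p : ℕ × Fin k, r ^ (((Nat.divModEquiv k).symm p : ℕ) / k) = r ^ p.1 := by
    intro p
    congr 1
    show (p.1 * k + (p.2 : ℕ)) / k = p.1
    rw [Nat.add_comm, Nat.add_mul_div_right _ _ (by omega : 0 < k),
      Nat.div_eq_of_lt p.2.isLt, Nat.zero_add]
  rw [tsum_congr hq, ENNReal.tsum_prod']
  have hfin : ∀ a : ℕ, (∑' _ : Fin k, r ^ a) = (k : ℝ≥0∞) * r ^ a := by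
    intro a
    rw [tsum_fintype, Finset.sum_const, Finset.card_univ, Fintype.card_fin, nsmul_eq_mul]
  rw [tsum_congr hfin, ENNReal.tsum_mul_left, ENNReal.tsum_geometric]
  have h1r : (1 : ℝ≥0∞) - r = ((k.factorial : ℝ≥0∞))⁻¹ := by
    rw [hrdef]
    exact ENNReal.sub_sub_cancel ENNReal.one_ne_top
      (ENNReal.inv_le_one.mpr (by exact_mod_cast Nat.one_le_cast.mpr k.factorial_pos))
  rw [h1r, inv_inv]
  exact ENNReal.mul_ne_top (ENNReal.natCast_ne_top _) (ENNReal.natCast_ne_top _)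

lemma lintegral_nat {α : Type*} [MeasurableSpace α] (μ : Measure α) (T : α → ℕ)
    (hT : ∀ n : ℕ, MeasurableSet {x | n < T x}) :
    ∫⁻ x, (T x : ℝ≥0∞) ∂μ = ∑' n : ℕ, μ {x | n < T x} := by
  have hpt : ∀ x, (T x : ℝ≥0∞) = ∑' n : ℕ, Set.indicator {y | n < T y} (fun _ => (1:ℝ≥0∞)) x := by
    intro x
    have h2 : ∀ n ∉ Finset.range (T x),
        Set.indicator {y | n < T y} (fun _ => (1:ℝ≥0∞)) x = 0 := by
      intro n hn
      rw [Set.indicator_of_notMem]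
      simpa using hn
    have h1 : ∀ n ∈ Finset.range (T x),
        Set.indicator {y | n < T y} (fun _ => (1:ℝ≥0∞)) x = 1 := by
      intro n hn
      rw [Set.indicator_of_mem]
      exact Finset.mem_range.mp hn
    rw [tsum_eq_sum h2, Finset.sum_congr rfl h1, Finset.sum_const, Finset.card_range,
      nsmul_eq_mul, mul_one]
  calc ∫⁻ x, (T x : ℝ≥0∞) ∂μ
      = ∫⁻ x, ∑' n : ℕ, Set.indicator {y | n < T y} (fun _ => (1:ℝ≥0∞)) x ∂μ :=
        lintegral_congr hpt
    _ = ∑' n : ℕ, ∫⁻ x, Set.indicator {y | n < T y} (fun _ => (1:ℝ≥0∞)) x ∂μ :=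
        lintegral_tsum fun n => (measurable_const.indicator (hT n)).aemeasurable
    _ = ∑' n : ℕ, μ {x | n < T x} := by
        refine tsum_congr fun n => ?_
        rw [lintegral_indicator (hT n), setLIntegral_one]

end HitAux

theorem expectation_hitTime (μ : Measure (ℕ → ℝ)) (hμ : IsIIDUniform μ)
    (k : ℕ) (hk : 1 ≤ k) (σ : Equiv.Perm (Fin k)) :
    Integrable (fun x => (hitTime σ x : ℝ)) μ ∧
    Summable (fun n : ℕ => (avoidCount σ n : ℝ) / n.factorial) ∧
    ∫ x, (hitTime σ x : ℝ) ∂μ = ∑' n : ℕ, (avoidCount σ n : ℝ) / n.factorial := by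
  classical
  haveI := hμ.1
  have htsum_ne : (∑' n : ℕ, μ (HitAux.AvoidSeq σ n)) ≠ ⊤ := by
    refine ne_top_of_le_ne_top (HitAux.tsum_bound hk) (ENNReal.tsum_le_tsum ?_)
    exact fun n => HitAux.mu_avoidSeq_le σ hμ hk n
  have hlint : ∫⁻ x, (hitTime σ x : ℝ≥0∞) ∂μ = ∑' n : ℕ, μ (HitAux.AvoidSeq σ n) := by
    rw [HitAux.lintegral_nat μ (hitTime σ) (HitAux.measurableSet_lt_hitTime σ)]
    exact tsum_congr fun n => HitAux.mu_lt_hitTime σ hμ hk n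
  have hmeasR : Measurable (fun x => (hitTime σ x : ℝ)) :=
    measurable_from_top.comp (HitAux.measurable_hitTime σ)
  have hnorm : ∫⁻ x, ‖(hitTime σ x : ℝ)‖ₑ ∂μ = ∫⁻ x, (hitTime σ x : ℝ≥0∞) ∂μ := by
    refine lintegral_congr fun x => ?_
    simp
  have hint : Integrable (fun x => (hitTime σ x : ℝ)) μ := by
    refine ⟨hmeasR.aestronglyMeasurable, ?_⟩
    rw [HasFiniteIntegral, hnorm, hlint]
    exact lt_top_iff_ne_top.mpr htsum_ne
  have hP : ∀ n, μ (HitAux.AvoidSeq σ n) = (avoidCount σ n : ℝ≥0∞) * ((n.factorial : ℝ≥0∞))⁻¹ :=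
    fun n => by rw [HitAux.mu_avoidSeq σ hμ, HitAux.nu_avoidFin]
  have htoReal : ∀ n, (μ (HitAux.AvoidSeq σ n)).toReal = (avoidCount σ n : ℝ) / n.factorial := by
    intro n
    rw [hP n, ENNReal.toReal_mul, ENNReal.toReal_inv, div_eq_mul_inv]
    simp
  refine ⟨hint, ?_, ?_⟩
  · have hs := ENNReal.summable_toReal htsum_ne
    exact (summable_congr fun n => (htoReal n)).mp hs
  · rw [integral_eq_lintegral_of_nonneg_ae
      (Filter.Eventually.of_forall fun x => Nat.cast_nonneg _) hmeasR.aestronglyMeasurable]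
    have hof : ∫⁻ x, ENNReal.ofReal ((hitTime σ x : ℝ)) ∂μ = ∫⁻ x, (hitTime σ x : ℝ≥0∞) ∂μ :=
      lintegral_congr fun x => ENNReal.ofReal_natCast _
    rw [hof, hlint, ENNReal.tsum_toReal_eq (fun n => measure_ne_top μ _)]
    exact tsum_congr htoReal


end
end

section
/- Let k ≥ 1 and σ ∈ S_k. Then the variance of T_σ under μ satisfies Var_μ(T_σ) = 2·Σ_{n≥1} α_n(σ)/(n−1)! + Σ_{n≥0} α_n(σ)/n! − (Σ_{n≥0} α_n(σ)/n!)², and in particular T_σ is square-integrable. -/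
open MeasureTheory ProbabilityTheory Real
open scoped ENNReal NNReal

noncomputable section

/-! ### Auxiliary development -/

def unif : Measure ℝ := (volume : Measure ℝ).restrict (Set.Icc 0 1)

instance : IsProbabilityMeasure unif :=
  ⟨by rw [unif, Measure.restrict_apply_univ]; simp [Real.volume_Icc]⟩

instance : NullSingletonClass unif := Measure.restrict.instNullSingletonClass _

def nu (n : ℕ) : Measure (Fin n → ℝ) := Measure.pi fun _ => unif

instance (n : ℕ) : IsProbabilityMeasure (nu n) := by unfold nu; infer_instance

def patEv {n : ℕ} (p : Equiv.Perm (Fin n)) : Set (Fin n → ℝ) :=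
  {y | ∀ a b : Fin n, y a < y b ↔ p a < p b}

lemma measurableSet_patEv {n : ℕ} (p : Equiv.Perm (Fin n)) : MeasurableSet (patEv p) := by
  have h : patEv p = ⋂ (a : Fin n) (b : Fin n), {y : Fin n → ℝ | y a < y b ↔ p a < p b} := by
    ext y; simp [patEv]
  rw [h]
  refine MeasurableSet.iInter fun a => MeasurableSet.iInter fun b => ?_
  by_cases hab : p a < p b
  · simp only [hab, iff_true]
    exact measurableSet_lt (measurable_pi_apply a) (measurable_pi_apply b)
  · simp only [hab, iff_false, ← Set.compl_setOf]
    exact (measurableSet_lt (measurable_pi_apply a) (measurable_pi_apply b)).compl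

lemma patEv_subset_inj {n : ℕ} (p : Equiv.Perm (Fin n)) :
    patEv p ⊆ {y : Fin n → ℝ | Function.Injective y} := by
  intro y hy a b hab
  by_contra hne
  have h1 : ¬ y a < y b := by rw [hab]; exact lt_irrefl _
  have h2 : ¬ y b < y a := by rw [hab]; exact lt_irrefl _
  rcases Ne.lt_or_gt (fun h : p a = p b => hne (p.injective h)) with h | h
  · exact h1 ((hy a b).2 h)
  · exact h2 ((hy b a).2 h)

lemma exists_patEv {n : ℕ} {y : Fin n → ℝ} (hy : Function.Injective y) :
    ∃ p : Equiv.Perm (Fin n), y ∈ patEv p := by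
  classical
  have hcard : (Finset.image y Finset.univ).card = n := by
    rw [Finset.card_image_of_injective _ hy, Finset.card_univ, Fintype.card_fin]
  set o := (Finset.image y Finset.univ).orderIsoOfFin hcard with ho
  have hmem : ∀ a, y a ∈ Finset.image y Finset.univ :=
    fun a => Finset.mem_image_of_mem y (Finset.mem_univ a)
  set f : Fin n → Fin n := fun a => o.symm ⟨y a, hmem a⟩ with hf
  have hiff : ∀ a b, y a < y b ↔ f a < f b := by
    intro a b
    show y a < y b ↔ o.symm ⟨y a, hmem a⟩ < o.symm ⟨y b, hmem b⟩
    rw [o.symm.lt_iff_lt, Subtype.mk_lt_mk]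
  have hinj : Function.Injective f := by
    intro a b hab
    apply hy
    have := o.symm.injective hab
    exact congrArg Subtype.val this
  have hbij : Function.Bijective f := (Finite.injective_iff_bijective).1 hinj
  exact ⟨Equiv.ofBijective f hbij, fun a b => hiff a b⟩

lemma patEv_disjoint {n : ℕ} {p q : Equiv.Perm (Fin n)} (hpq : p ≠ q) :
    Disjoint (patEv p) (patEv q) := by
  rw [Set.disjoint_left]
  intro y hyp hyq
  apply hpq
  have key : ∀ a b, p a < p b ↔ q a < q b := fun a b => (hyp a b).symm.trans (hyq a b)
  have hsm : StrictMono (fun u => q (p.symm u)) := by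
    intro u v huv
    have h := (key (p.symm u) (p.symm v)).1
    simp only [Equiv.apply_symm_apply] at h
    exact h huv
  have hr : Set.range (fun u => q (p.symm u)) = Set.range (id : Fin n → Fin n) := by
    rw [Set.range_id]
    exact Set.range_eq_univ.2 fun u => ⟨p (q.symm u), by simp⟩
  haveI : WellFoundedLT (Fin n) := Finite.to_wellFoundedLT
  have hid := (hsm.range_inj strictMono_id).1 hr
  ext a
  have := congrFun hid (p a)
  simp only [Equiv.symm_apply_apply, id_eq] at this
  exact this.symm ▸ rfl


lemma nu_pair_null {n : ℕ} (a b : Fin n) (hab : a ≠ b) : nu n {y | y a = y b} = 0 := by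
  match n, a, b with
  | (m+1), a, b =>
  obtain ⟨j, hj⟩ := Fin.exists_succAbove_eq hab.symm
  have hmp := measurePreserving_piFinSuccAbove (fun _ : Fin (m+1) => unif) a
  set e := MeasurableEquiv.piFinSuccAbove (fun _ : Fin (m+1) => ℝ) a with he
  have hT : MeasurableSet {q : ℝ × (Fin m → ℝ) | q.1 = q.2 j} :=
    measurableSet_eq_fun measurable_fst ((measurable_pi_apply j).comp measurable_snd)
  have hpre : {y : Fin (m+1) → ℝ | y a = y b} = e ⁻¹' {q | q.1 = q.2 j} := by
    ext y
    simp only [Set.mem_preimage, Set.mem_setOf_eq, he,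
      MeasurableEquiv.piFinSuccAbove_apply]
    rw [← hj]
    rfl
  have h0 : ∀ t : ℝ,
      (Measure.pi fun _ : Fin m => unif) (Prod.mk t ⁻¹' {q : ℝ × (Fin m → ℝ) | q.1 = q.2 j}) = 0 := by
    intro t
    have hs : (Prod.mk t ⁻¹' {q : ℝ × (Fin m → ℝ) | q.1 = q.2 j}) = {z : Fin m → ℝ | z j = t} := by
      ext z; simp [eq_comm]
    rw [hs]
    exact Measure.pi_hyperplane (fun _ : Fin m => unif) j t
  have := hmp.measure_preimage (s := {q : ℝ × (Fin m → ℝ) | q.1 = q.2 j}) hT.nullMeasurableSet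
  rw [hpre]
  unfold nu
  rw [this, Measure.prod_apply hT]
  simp only [h0]
  simp

lemma nu_inj_compl {n : ℕ} : nu n {y : Fin n → ℝ | ¬ Function.Injective y} = 0 := by
  have hsub : {y : Fin n → ℝ | ¬ Function.Injective y} ⊆
      ⋃ (a : Fin n) (b : Fin n) (_ : a ≠ b), {y : Fin n → ℝ | y a = y b} := by
    intro y hy
    simp only [Set.mem_setOf_eq, Function.Injective] at hy
    push_neg at hy
    obtain ⟨a, b, hab, hne⟩ := hy
    exact Set.mem_iUnion.2 ⟨a, Set.mem_iUnion.2 ⟨b, Set.mem_iUnion.2 ⟨hne, hab⟩⟩⟩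
  refine measure_mono_null hsub ?_
  refine measure_iUnion_null fun a => measure_iUnion_null fun b => measure_iUnion_null fun hab =>
    nu_pair_null a b hab

lemma nu_patEv_eq {n : ℕ} (p : Equiv.Perm (Fin n)) : nu n (patEv p) = nu n (patEv 1) := by
  have hmp := measurePreserving_piCongrLeft (fun _ : Fin n => unif) (p : Fin n ≃ Fin n)
  set e := MeasurableEquiv.piCongrLeft (fun _ : Fin n => ℝ) (p : Fin n ≃ Fin n) with he
  have happ : ∀ (y : Fin n → ℝ) (i : Fin n), e y (p i) = y i := by
    intro y i
    rw [he]
    show (Equiv.piCongrLeft (fun _ : Fin n => ℝ) (p : Fin n ≃ Fin n)) y (p i) = y i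
    exact Equiv.piCongrLeft_apply_apply _ _ _ _
  have hpre : e ⁻¹' (patEv 1) = patEv p := by
    ext y
    simp only [Set.mem_preimage, patEv, Set.mem_setOf_eq]
    constructor
    · intro h a b
      have h2 := h (p a) (p b)
      rw [happ, happ] at h2
      simpa using h2
    · intro h a b
      obtain ⟨a', rfl⟩ := p.surjective a
      obtain ⟨b', rfl⟩ := p.surjective b
      rw [happ, happ]
      simpa using h a' b'
  have := hmp.measure_preimage (s := patEv (1 : Equiv.Perm (Fin n)))
    (measurableSet_patEv 1).nullMeasurableSet
  rw [← hpre]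
  exact this

lemma nu_patEv {n : ℕ} (p : Equiv.Perm (Fin n)) :
    nu n (patEv p) = ((n.factorial : ℝ≥0∞))⁻¹ := by
  classical
  have hunion : (⋃ q : Equiv.Perm (Fin n), patEv q) = {y : Fin n → ℝ | Function.Injective y} := by
    apply Set.Subset.antisymm
    · exact Set.iUnion_subset fun q => patEv_subset_inj q
    · intro y hy
      obtain ⟨q, hq⟩ := exists_patEv hy
      exact Set.mem_iUnion.2 ⟨q, hq⟩
  have hsum : ∑' q : Equiv.Perm (Fin n), nu n (patEv q)
      = nu n {y : Fin n → ℝ | Function.Injective y} := by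
    rw [← hunion]
    exact (measure_iUnion (fun q q' hqq' => patEv_disjoint hqq') fun q => measurableSet_patEv q).symm
  have h1 : nu n {y : Fin n → ℝ | Function.Injective y} = 1 := by
    have hm : MeasurableSet {y : Fin n → ℝ | Function.Injective y} := by
      rw [← hunion]; exact MeasurableSet.iUnion fun q => measurableSet_patEv q
    have := measure_add_measure_compl (μ := nu n) hm
    rw [show {y : Fin n → ℝ | Function.Injective y}ᶜ = {y : Fin n → ℝ | ¬ Function.Injective y}
        from rfl, nu_inj_compl, add_zero] at this
    rw [this, measure_univ]
  have hconst : ∀ q : Equiv.Perm (Fin n), nu n (patEv q) = nu n (patEv 1) := nu_patEv_eq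
  rw [tsum_congr hconst, tsum_fintype, Finset.sum_const, Finset.card_univ, h1,
    Fintype.card_perm, Fintype.card_fin, nsmul_eq_mul] at hsum
  have hfac0 : (n.factorial : ℝ≥0∞) ≠ 0 := by
    exact_mod_cast Nat.cast_ne_zero.2 n.factorial_ne_zero
  have hfact : (n.factorial : ℝ≥0∞) ≠ ⊤ := ENNReal.natCast_ne_top _
  have hval : nu n (patEv (1 : Equiv.Perm (Fin n))) = ((n.factorial : ℝ≥0∞))⁻¹ := by
    calc nu n (patEv 1) = ((n.factorial : ℝ≥0∞)⁻¹ * (n.factorial : ℝ≥0∞)) * nu n (patEv 1) := by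
          rw [ENNReal.inv_mul_cancel hfac0 hfact, one_mul]
      _ = (n.factorial : ℝ≥0∞)⁻¹ * ((n.factorial : ℝ≥0∞) * nu n (patEv 1)) := by ring
      _ = (n.factorial : ℝ≥0∞)⁻¹ := by rw [hsum, mul_one]
  rw [nu_patEv_eq p, hval]


variable {k : ℕ}

def winIdx {n : ℕ} (k : ℕ) (i : ℕ) (h : i + k ≤ n) (a : Fin k) : Fin n :=
  ⟨i + a, Nat.lt_of_lt_of_le (Nat.add_lt_add_left a.isLt i) h⟩

def avoidSet (σ : Equiv.Perm (Fin k)) (n : ℕ) : Set (Fin n → ℝ) :=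
  {y | ∀ (i : ℕ) (h : i + k ≤ n),
    ¬ ∀ a b : Fin k, (y (winIdx k i h a) < y (winIdx k i h b) ↔ σ a < σ b)}

lemma measurableSet_avoidSet (σ : Equiv.Perm (Fin k)) (n : ℕ) :
    MeasurableSet (avoidSet σ n) := by
  have h : avoidSet σ n = ⋂ (i : ℕ), ⋂ (h : i + k ≤ n),
      (⋂ (a : Fin k) (b : Fin k),
        {y : Fin n → ℝ | y (winIdx k i h a) < y (winIdx k i h b) ↔ σ a < σ b})ᶜ := by
    ext y
    simp only [avoidSet, Set.mem_setOf_eq, Set.mem_iInter, Set.mem_compl_iff]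
  rw [h]
  refine MeasurableSet.iInter fun i => MeasurableSet.iInter fun h => MeasurableSet.compl ?_
  refine MeasurableSet.iInter fun a => MeasurableSet.iInter fun b => ?_
  by_cases hab : σ a < σ b
  · simp only [hab, iff_true]
    exact measurableSet_lt (measurable_pi_apply _) (measurable_pi_apply _)
  · simp only [hab, iff_false, ← Set.compl_setOf]
    exact (measurableSet_lt (measurable_pi_apply (winIdx k i h a))
      (measurable_pi_apply (winIdx k i h b))).compl

lemma patEv_avoid {n : ℕ} {σ : Equiv.Perm (Fin k)} {p : Equiv.Perm (Fin n)} {y : Fin n → ℝ}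
    (hy : y ∈ patEv p) : y ∈ avoidSet σ n ↔ ∀ i, ¬ PermOccursAt σ p i := by
  constructor
  · intro H i hocc
    obtain ⟨h, hab⟩ := hocc
    exact H i h fun a b => (hy (winIdx k i h a) (winIdx k i h b)).trans (hab a b)
  · intro H i h hall
    exact H i ⟨h, fun a b => (hy (winIdx k i h a) (winIdx k i h b)).symm.trans (hall a b)⟩

lemma permOccursAt_self (σ : Equiv.Perm (Fin k)) : PermOccursAt σ σ 0 := by
  refine ⟨by omega, fun a b => ?_⟩
  have e : ∀ (a : Fin k) (h : 0 + (a : ℕ) < k), (⟨0 + (a : ℕ), h⟩ : Fin k) = a := by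
    intro a h; ext; simp
  rw [e a, e b]

open Classical in
lemma avoidCount_eq (σ : Equiv.Perm (Fin k)) (n : ℕ) :
    avoidCount σ n
      = (Finset.univ.filter (fun p : Equiv.Perm (Fin n) => ∀ i, ¬ PermOccursAt σ p i)).card := by
  rw [avoidCount, Nat.card_eq_fintype_card, Fintype.card_subtype]

lemma avoidCount_lt (σ : Equiv.Perm (Fin k)) :
    avoidCount σ k ≤ k.factorial - 1 := by
  classical
  rw [avoidCount_eq]
  have hsub : (Finset.univ.filter (fun p : Equiv.Perm (Fin k) => ∀ i, ¬ PermOccursAt σ p i))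
      ⊆ Finset.univ.erase σ := by
    intro p hp
    rw [Finset.mem_filter] at hp
    refine Finset.mem_erase.2 ⟨?_, Finset.mem_univ _⟩
    rintro rfl
    exact hp.2 0 (permOccursAt_self _)
  calc _ ≤ (Finset.univ.erase σ).card := Finset.card_le_card hsub
    _ = k.factorial - 1 := by
        rw [Finset.card_erase_of_mem (Finset.mem_univ _), Finset.card_univ,
          Fintype.card_perm, Fintype.card_fin]

lemma nu_avoidSet (σ : Equiv.Perm (Fin k)) (n : ℕ) :
    nu n (avoidSet σ n) = (avoidCount σ n : ℝ≥0∞) * ((n.factorial : ℝ≥0∞))⁻¹ := by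
  classical
  set F := Finset.univ.filter (fun p : Equiv.Perm (Fin n) => ∀ i, ¬ PermOccursAt σ p i) with hF
  have key : avoidSet σ n ∩ {y : Fin n → ℝ | Function.Injective y} = ⋃ p ∈ F, patEv p := by
    apply Set.Subset.antisymm
    · rintro y ⟨hya, hyi⟩
      obtain ⟨p, hp⟩ := exists_patEv hyi
      have hpF : p ∈ F := Finset.mem_filter.2 ⟨Finset.mem_univ _, (patEv_avoid hp).1 hya⟩
      exact Set.mem_biUnion hpF hp
    · intro y hy
      rw [Set.mem_iUnion₂] at hy
      obtain ⟨p, hpF, hp⟩ := hy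
      rw [hF, Finset.mem_filter] at hpF
      exact ⟨(patEv_avoid hp).2 hpF.2, patEv_subset_inj p hp⟩
  have h0 : nu n (avoidSet σ n) = nu n (avoidSet σ n ∩ {y | Function.Injective y}) :=
    (measure_inter_conull (by exact nu_inj_compl)).symm
  rw [h0, key, measure_biUnion_finset ?_ (fun p _ => measurableSet_patEv p)]
  · rw [Finset.sum_congr rfl (fun p _ => nu_patEv p), Finset.sum_const, nsmul_eq_mul,
      avoidCount_eq]
  · intro p _ q _ hpq
    exact patEv_disjoint hpq

lemma nu_avoid_submul (σ : Equiv.Perm (Fin k)) (m n : ℕ) :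
    nu (m + n) (avoidSet σ (m + n)) ≤ nu m (avoidSet σ m) * nu n (avoidSet σ n) := by
  have h1 := measurePreserving_piCongrLeft (fun _ : Fin (m+n) => unif) finSumFinEquiv
  have h2 := (measurePreserving_sumPiEquivProdPi (fun _ : Fin m ⊕ Fin n => unif)).symm
  have hmp := h1.comp h2
  set F : ((Fin m → ℝ) × (Fin n → ℝ)) → (Fin (m+n) → ℝ) :=
    (MeasurableEquiv.piCongrLeft (fun _ : Fin (m+n) => ℝ) finSumFinEquiv) ∘
      (MeasurableEquiv.sumPiEquivProdPi (fun _ : Fin m ⊕ Fin n => ℝ)).symm with hFdef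
  have happl : ∀ (u : Fin m → ℝ) (v : Fin n → ℝ) (t : Fin m),
      F (u, v) (Fin.castAdd n t) = u t := by
    intro u v t
    rw [hFdef]
    show (Equiv.piCongrLeft (fun _ : Fin (m+n) => ℝ) finSumFinEquiv)
      ((Equiv.sumPiEquivProdPi (fun _ : Fin m ⊕ Fin n => ℝ)).symm (u, v)) (Fin.castAdd n t) = u t
    rw [← finSumFinEquiv_apply_left]
    exact Equiv.piCongrLeft_sumInl _ _ _ _ _
  have happr : ∀ (u : Fin m → ℝ) (v : Fin n → ℝ) (t : Fin n),
      F (u, v) (Fin.natAdd m t) = v t := by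
    intro u v t
    rw [hFdef]
    show (Equiv.piCongrLeft (fun _ : Fin (m+n) => ℝ) finSumFinEquiv)
      ((Equiv.sumPiEquivProdPi (fun _ : Fin m ⊕ Fin n => ℝ)).symm (u, v)) (Fin.natAdd m t) = v t
    rw [← finSumFinEquiv_apply_right]
    exact Equiv.piCongrLeft_sumInr _ _ _ _ _
  have hsub : F ⁻¹' (avoidSet σ (m + n)) ⊆ (avoidSet σ m) ×ˢ (avoidSet σ n) := by
    rintro ⟨u, v⟩ hw
    have hw' : F (u, v) ∈ avoidSet σ (m + n) := hw
    constructor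
    · intro i h hall
      have h' : i + k ≤ m + n := le_trans h (Nat.le_add_right m n)
      refine hw' i h' fun a b => ?_
      have e1 : winIdx k i h' a = Fin.castAdd n (winIdx k i h a) := by ext; simp [winIdx]
      have e2 : winIdx k i h' b = Fin.castAdd n (winIdx k i h b) := by ext; simp [winIdx]
      rw [e1, e2, happl, happl]
      exact hall a b
    · intro i h hall
      have h' : (m + i) + k ≤ m + n := by omega
      refine hw' (m + i) h' fun a b => ?_
      have e1 : winIdx k (m + i) h' a = Fin.natAdd m (winIdx k i h a) := by
        ext; simp [winIdx]; omega
      have e2 : winIdx k (m + i) h' b = Fin.natAdd m (winIdx k i h b) := by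
        ext; simp [winIdx]; omega
      rw [e1, e2, happr, happr]
      exact hall a b
  have hF : nu (m + n) (avoidSet σ (m + n))
      = ((nu m).prod (nu n)) (F ⁻¹' (avoidSet σ (m + n))) := by
    have := hmp.measure_preimage (s := avoidSet σ (m + n))
      (measurableSet_avoidSet σ (m + n)).nullMeasurableSet
    exact this.symm
  rw [hF]
  calc ((nu m).prod (nu n)) (F ⁻¹' (avoidSet σ (m + n)))
      ≤ ((nu m).prod (nu n)) ((avoidSet σ m) ×ˢ (avoidSet σ n)) := measure_mono hsub
    _ = nu m (avoidSet σ m) * nu n (avoidSet σ n) := by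
        rw [Measure.prod_prod]


def restr (n : ℕ) : (ℕ → ℝ) → (Fin n → ℝ) := fun x i => x i

lemma measurable_restr (n : ℕ) : Measurable (restr n) :=
  measurable_pi_lambda _ fun i => measurable_pi_apply _

def Aset (σ : Equiv.Perm (Fin k)) (n : ℕ) : Set (ℕ → ℝ) := restr n ⁻¹' avoidSet σ n

lemma measurableSet_Aset (σ : Equiv.Perm (Fin k)) (n : ℕ) : MeasurableSet (Aset σ n) :=
  (measurable_restr n) (measurableSet_avoidSet σ n)

lemma mem_Aset_iff {σ : Equiv.Perm (Fin k)} {n : ℕ} {x : ℕ → ℝ} :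
    x ∈ Aset σ n ↔ ∀ i, i + k ≤ n → ¬ OccursAt σ x i := by
  constructor
  · intro H i hik hocc
    exact H i hik fun a b => hocc a b
  · intro H i hik hall
    exact H i hik fun a b => hall a b

lemma Aset_antitone {σ : Equiv.Perm (Fin k)} {m n : ℕ} (hmn : m ≤ n) :
    Aset σ n ⊆ Aset σ m := by
  intro x hx
  rw [mem_Aset_iff] at hx ⊢
  exact fun i hik => hx i (hik.trans hmn)

section Mu
variable {μ : Measure (ℕ → ℝ)} (hμ : IsIIDUniform μ) (σ : Equiv.Perm (Fin k))

include hμ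

lemma mu_Aset (n : ℕ) : μ (Aset σ n) = nu n (avoidSet σ n) := by
  rw [Aset, ← Measure.map_apply (measurable_restr n) (measurableSet_avoidSet σ n)]
  have h2 := hμ.2 n
  show (μ.map (fun x (i : Fin n) => x i)) (avoidSet σ n) = _
  rw [h2]
  rfl

lemma mu_Aset' (n : ℕ) :
    μ (Aset σ n) = (avoidCount σ n : ℝ≥0∞) * ((n.factorial : ℝ≥0∞))⁻¹ := by
  rw [mu_Aset hμ, nu_avoidSet]

def Sset (σ : Equiv.Perm (Fin k)) : Set (ℕ → ℝ) := ⋂ n, Aset σ n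

omit hμ in
lemma mem_Sset_iff {σ : Equiv.Perm (Fin k)} {x : ℕ → ℝ} :
    x ∈ Sset σ ↔ ∀ i, ¬ OccursAt σ x i := by
  simp only [Sset, Set.mem_iInter, mem_Aset_iff]
  constructor
  · intro H i; exact H (i + k) i le_rfl
  · intro H n i _; exact H i

omit hμ in
lemma hitTime_gt_iff {σ : Equiv.Perm (Fin k)} {x : ℕ → ℝ} (hx : x ∉ Sset σ) (n : ℕ) :
    n < hitTime σ x ↔ x ∈ Aset σ n := by
  rw [mem_Sset_iff] at hx
  push_neg at hx
  obtain ⟨i, hi⟩ := hx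
  have hne : {j | k ≤ j ∧ OccursAt σ x (j - k)}.Nonempty :=
    ⟨i + k, Nat.le_add_left k i, by rwa [Nat.add_sub_cancel]⟩
  constructor
  · intro hlt
    rw [mem_Aset_iff]
    intro i' hik hocc
    have : i' + k ∈ {j | k ≤ j ∧ OccursAt σ x (j - k)} :=
      ⟨Nat.le_add_left k i', by rwa [Nat.add_sub_cancel]⟩
    have := Nat.sInf_le this
    rw [hitTime] at hlt
    omega
  · intro hA
    by_contra hle
    push_neg at hle
    have hmem := Nat.sInf_mem hne
    rw [hitTime] at hle
    set King := sInf {j | k ≤ j ∧ OccursAt σ x (j - k)}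
    obtain ⟨hk1, hk2⟩ := hmem
    rw [mem_Aset_iff] at hA
    exact hA (King - k) (by omega) hk2

omit hμ in
lemma hitTime_gt_set (σ : Equiv.Perm (Fin k)) (n : ℕ) :
    {x : ℕ → ℝ | n < hitTime σ x} = Aset σ n \ Sset σ := by
  ext x
  simp only [Set.mem_setOf_eq, Set.mem_diff]
  constructor
  · intro h
    have hx : x ∉ Sset σ := by
      intro hxS
      have hempty : {j | k ≤ j ∧ OccursAt σ x (j - k)} = ∅ := by
        rw [Set.eq_empty_iff_forall_notMem]
        rintro j ⟨hj1, hj2⟩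
        exact (mem_Sset_iff.1 hxS) (j - k) hj2
      rw [hitTime, hempty, Nat.sInf_empty] at h
      omega
    exact ⟨(hitTime_gt_iff hx n).1 h, hx⟩
  · rintro ⟨hA, hS⟩
    exact (hitTime_gt_iff hS n).2 hA

lemma mu_Sset_aux (j : ℕ) :
    μ (Aset σ (j * k)) ≤ (nu k (avoidSet σ k)) ^ j := by
  haveI : IsProbabilityMeasure μ := hμ.1
  induction j with
  | zero => simpa using prob_le_one
  | succ j ih =>
      have : μ (Aset σ ((j + 1) * k)) = nu (j * k + k) (avoidSet σ (j * k + k)) := by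
        rw [mu_Aset hμ]
        congr 1 <;> rw [Nat.succ_mul]
      rw [this]
      calc nu (j * k + k) (avoidSet σ (j * k + k))
          ≤ nu (j * k) (avoidSet σ (j * k)) * nu k (avoidSet σ k) := nu_avoid_submul σ _ _
        _ ≤ (nu k (avoidSet σ k)) ^ j * nu k (avoidSet σ k) := by
            refine mul_le_mul' ?_ le_rfl
            rw [← mu_Aset hμ]
            exact ih
        _ = (nu k (avoidSet σ k)) ^ (j + 1) := by rw [pow_succ]

end Mu


lemma measurableSet_gt (σ : Equiv.Perm (Fin k)) (n : ℕ) :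
    MeasurableSet {x : ℕ → ℝ | n < hitTime σ x} := by
  rw [hitTime_gt_set]
  exact (measurableSet_Aset σ n).diff (MeasurableSet.iInter fun m => measurableSet_Aset σ m)

lemma measurable_hitTime (σ : Equiv.Perm (Fin k)) : Measurable (hitTime σ) := by
  apply measurable_to_countable'
  intro m
  match m with
  | 0 =>
    have h : hitTime σ ⁻¹' {0} = {x : ℕ → ℝ | 0 < hitTime σ x}ᶜ := by
      ext x; simp [Nat.pos_iff_ne_zero]
    rw [h]
    exact (measurableSet_gt σ 0).compl
  | (m+1) =>
    have h : hitTime σ ⁻¹' {m+1}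
        = {x : ℕ → ℝ | m < hitTime σ x} \ {x : ℕ → ℝ | m+1 < hitTime σ x} := by
      ext x; simp only [Set.mem_preimage, Set.mem_singleton_iff, Set.mem_diff, Set.mem_setOf_eq]
      omega
    rw [h]
    exact (measurableSet_gt σ m).diff (measurableSet_gt σ (m+1))

def rho (σ : Equiv.Perm (Fin k)) : ℝ≥0∞ := max (nu k (avoidSet σ k)) 2⁻¹

lemma rho_lt_one (σ : Equiv.Perm (Fin k)) (hk : 1 ≤ k) : rho σ < 1 := by
  rw [rho, max_lt_iff]
  constructor
  · rw [nu_avoidSet, ← div_eq_mul_inv]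
    rw [ENNReal.div_lt_iff (Or.inl ?_) (Or.inl (ENNReal.natCast_ne_top _))]
    · rw [one_mul, Nat.cast_lt]
      have h1 := avoidCount_lt σ
      have h2 := k.factorial_pos
      omega
    · exact_mod_cast Nat.cast_ne_zero.2 k.factorial_ne_zero
  · exact ENNReal.inv_lt_one.2 (by norm_num)

lemma rho_ne_zero (σ : Equiv.Perm (Fin k)) : rho σ ≠ 0 := by
  have : (2⁻¹ : ℝ≥0∞) ≤ rho σ := le_max_right _ _
  intro h
  rw [h] at this
  simp at this

section Mu
variable {μ : Measure (ℕ → ℝ)} (hμ : IsIIDUniform μ) (σ : Equiv.Perm (Fin k)) (hk : 1 ≤ k)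

include hμ

lemma mu_Aset_le (n : ℕ) : μ (Aset σ n) ≤ rho σ ^ (n / k) := by
  calc μ (Aset σ n) ≤ μ (Aset σ ((n / k) * k)) :=
        measure_mono (Aset_antitone (Nat.div_mul_le_self n k))
    _ ≤ (nu k (avoidSet σ k)) ^ (n / k) := mu_Sset_aux hμ σ (n / k)
    _ ≤ (rho σ) ^ (n / k) := pow_le_pow_left' (le_max_left _ _) _

include hk

lemma mu_Sset_zero : μ (Sset σ) = 0 := by
  have hbound : ∀ j, μ (Sset σ) ≤ rho σ ^ j := fun j =>
    calc μ (Sset σ) ≤ μ (Aset σ (j * k)) := measure_mono (Set.iInter_subset _ _)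
      _ ≤ (nu k (avoidSet σ k)) ^ j := mu_Sset_aux hμ σ j
      _ ≤ rho σ ^ j := pow_le_pow_left' (le_max_left _ _) _
  have htend := ENNReal.tendsto_pow_atTop_nhds_zero_of_lt_one (rho_lt_one σ hk)
  exact le_antisymm (ge_of_tendsto' htend hbound) zero_le

lemma mu_gt (n : ℕ) :
    μ {x : ℕ → ℝ | n < hitTime σ x} = (avoidCount σ n : ℝ≥0∞) * ((n.factorial : ℝ≥0∞))⁻¹ := by
  rw [hitTime_gt_set σ n, measure_diff_null (mu_Sset_zero hμ σ hk), mu_Aset hμ σ n,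
    nu_avoidSet]

omit hk in
lemma mu_gt_le (n : ℕ) : μ {x : ℕ → ℝ | n < hitTime σ x} ≤ rho σ ^ (n / k) := by
  rw [hitTime_gt_set σ n]
  exact le_trans (measure_mono Set.diff_subset) (mu_Aset_le hμ σ n)

end Mu

/-- Layer-cake for `ℕ`-valued random variables, `ℝ≥0∞` version. -/
lemma lintegral_nat_eq {α : Type*} [MeasurableSpace α] (ν : Measure α) (T : α → ℕ)
    (hT : Measurable T) (c : ℕ → ℝ≥0∞) :
    ∫⁻ x, (∑ n ∈ Finset.range (T x), c n) ∂ν = ∑' n : ℕ, c n * ν {x | n < T x} := by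
  have h1 : ∫⁻ x, (∑ n ∈ Finset.range (T x), c n) ∂ν
      = ∫⁻ m, (∑ n ∈ Finset.range m, c n) ∂(ν.map T) :=
    (lintegral_map (f := fun m : ℕ => ∑ n ∈ Finset.range m, c n) measurable_from_nat hT).symm
  rw [h1, lintegral_countable']
  have h2 : ∀ m : ℕ, (ν.map T) {m} = ν {x | T x = m} := by
    intro m
    rw [Measure.map_apply hT (measurableSet_singleton m)]
    rfl
  simp only [h2]
  have h3 : ∀ n, ν {x | n < T x} = ∑' m, if n < m then ν {x | T x = m} else 0 := by
    intro n
    have hset : {x | n < T x} = ⋃ m, (if n < m then {x | T x = m} else ∅) := by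
      ext x
      simp only [Set.mem_setOf_eq, Set.mem_iUnion]
      constructor
      · intro h
        refine ⟨T x, ?_⟩
        rw [if_pos h]
        exact rfl
      · rintro ⟨m, hm⟩
        by_cases hnm : n < m
        · rw [if_pos hnm] at hm
          have : T x = m := hm
          omega
        · rw [if_neg hnm] at hm
          exact absurd hm (Set.notMem_empty x)
    rw [hset, measure_iUnion]
    · exact tsum_congr fun m => by split_ifs <;> simp
    · intro m m' hmm'
      have hsubm : ∀ m : ℕ, (if n < m then {x | T x = m} else ∅) ⊆ {x | T x = m} := by
        intro m; split_ifs
        · exact Set.Subset.rfl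
        · exact Set.empty_subset _
      refine Disjoint.mono (hsubm m) (hsubm m') (Set.disjoint_left.2 fun x hx hx' => ?_)
      exact hmm' ((hx : T x = m).symm.trans (hx' : T x = m'))
    · intro m
      split_ifs
      · exact hT (measurableSet_singleton _)
      · exact MeasurableSet.empty
  calc ∑' m, (∑ n ∈ Finset.range m, c n) * ν {x | T x = m}
      = ∑' m, ∑' n, (if n < m then c n else 0) * ν {x | T x = m} := by
        refine tsum_congr fun m => ?_
        have hs : ∑' n, (if n < m then c n else 0) = ∑ n ∈ Finset.range m, c n := by
          rw [tsum_eq_sum (s := Finset.range m) (fun n hn => if_neg (by simpa using hn))]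
          exact Finset.sum_congr rfl fun n hn => if_pos (Finset.mem_range.1 hn)
        rw [← hs, ← ENNReal.tsum_mul_right]
    _ = ∑' n, ∑' m, (if n < m then c n else 0) * ν {x | T x = m} := ENNReal.tsum_comm
    _ = ∑' n : ℕ, c n * ν {x | n < T x} := by
        refine tsum_congr fun n => ?_
        rw [h3 n, ← ENNReal.tsum_mul_left]
        exact tsum_congr fun m => by split_ifs <;> simp

lemma lintegral_hitTime {α : Type*} [MeasurableSpace α] (ν : Measure α) (T : α → ℕ)
    (hT : Measurable T) :
    ∫⁻ x, (T x : ℝ≥0∞) ∂ν = ∑' n : ℕ, ν {x | n < T x} := by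
  have h : ∀ x, ((T x : ℝ≥0∞)) = ∑ n ∈ Finset.range (T x), (1 : ℝ≥0∞) := by
    intro x; simp
  calc ∫⁻ x, (T x : ℝ≥0∞) ∂ν = ∫⁻ x, (∑ n ∈ Finset.range (T x), (1:ℝ≥0∞)) ∂ν := by
        exact lintegral_congr h
    _ = ∑' n, 1 * ν {x | n < T x} := lintegral_nat_eq ν T hT _
    _ = ∑' n : ℕ, ν {x | n < T x} := by simp

lemma sum_range_odd (m : ℕ) :
    ∑ n ∈ Finset.range m, (2 * (n : ℝ≥0∞) + 1) = ((m : ℝ≥0∞)) ^ 2 := by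
  induction m with
  | zero => simp
  | succ m ih =>
      rw [Finset.sum_range_succ, ih]
      push_cast
      ring

lemma lintegral_hitTime_sq {α : Type*} [MeasurableSpace α] (ν : Measure α) (T : α → ℕ)
    (hT : Measurable T) :
    ∫⁻ x, ((T x : ℝ≥0∞)) ^ 2 ∂ν = ∑' n : ℕ, (2 * (n : ℝ≥0∞) + 1) * ν {x | n < T x} := by
  have h : ∀ x, ((T x : ℝ≥0∞)) ^ 2 = ∑ n ∈ Finset.range (T x), (2 * (n : ℝ≥0∞) + 1) := by
    intro x; rw [sum_range_odd]
  calc ∫⁻ x, ((T x : ℝ≥0∞)) ^ 2 ∂ν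
      = ∫⁻ x, (∑ n ∈ Finset.range (T x), (2 * (n : ℝ≥0∞) + 1)) ∂ν := lintegral_congr h
    _ = ∑' n : ℕ, (2 * (n : ℝ≥0∞) + 1) * ν {x | n < T x} := lintegral_nat_eq ν T hT _

/-- geometric-tail finiteness -/
lemma tail_sum_fin {μ : Measure (ℕ → ℝ)} (hμ : IsIIDUniform μ) (σ : Equiv.Perm (Fin k))
    (hk : 1 ≤ k) :
    ∑' n : ℕ, (2 * (n : ℝ≥0∞) + 1) * μ {x : ℕ → ℝ | n < hitTime σ x} ≠ ⊤ := by
  set ρ := rho σ with hρ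
  have hρ1 : ρ < 1 := rho_lt_one σ hk
  have hρ0 : ρ ≠ 0 := rho_ne_zero σ
  have hρt : ρ ≠ ⊤ := ne_top_of_lt (lt_of_lt_of_le hρ1 le_top)
  set r : ℝ≥0∞ := ρ ^ ((1 : ℝ) / k) with hrdef
  have hr1 : r < 1 := ENNReal.rpow_lt_one hρ1 (by positivity)
  have hbound : ∀ n : ℕ, ρ ^ (n / k) ≤ ρ⁻¹ * r ^ n := by
    intro n
    have hexp : (n : ℝ) / k - 1 ≤ ((n / k : ℕ) : ℝ) := by
      have hmod := Nat.div_add_mod n k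
      have hlt : n % k < k := Nat.mod_lt n (by omega)
      have : (n : ℝ) - k ≤ (k : ℝ) * ((n / k : ℕ) : ℝ) := by
        have : n ≤ k * (n / k) + k := by omega
        have := (Nat.cast_le (α := ℝ)).2 this
        push_cast at this
        linarith
      have hkpos : (0 : ℝ) < k := by exact_mod_cast hk
      rw [div_sub_one (ne_of_gt hkpos), div_le_iff₀ hkpos]
      have hcomm := mul_comm (k : ℝ) ((n / k : ℕ) : ℝ)
      linarith [this]
    calc ρ ^ (n / k) = ρ ^ (((n / k : ℕ) : ℝ)) := (ENNReal.rpow_natCast ρ _).symm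
      _ ≤ ρ ^ ((n : ℝ) / k - 1) := ENNReal.rpow_le_rpow_of_exponent_ge (le_of_lt hρ1) hexp
      _ = ρ⁻¹ * r ^ n := by
          rw [sub_eq_add_neg, add_comm, ENNReal.rpow_add _ _ hρ0 hρt, ENNReal.rpow_neg_one]
          congr 1
          rw [hrdef, ← ENNReal.rpow_natCast (ρ ^ ((1:ℝ)/k)) n, ← ENNReal.rpow_mul]
          congr 1
          field_simp
  have hle : ∑' n : ℕ, (2 * (n : ℝ≥0∞) + 1) * μ {x : ℕ → ℝ | n < hitTime σ x}
      ≤ ρ⁻¹ * ∑' n : ℕ, (2 * (n : ℝ≥0∞) + 1) * r ^ n := by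
    rw [← ENNReal.tsum_mul_left]
    refine ENNReal.tsum_le_tsum fun n => ?_
    calc (2 * (n : ℝ≥0∞) + 1) * μ {x : ℕ → ℝ | n < hitTime σ x}
        ≤ (2 * (n : ℝ≥0∞) + 1) * (ρ ^ (n / k)) :=
          mul_le_mul' le_rfl (mu_gt_le hμ σ n)
      _ ≤ (2 * (n : ℝ≥0∞) + 1) * (ρ⁻¹ * r ^ n) := mul_le_mul' le_rfl (hbound n)
      _ = ρ⁻¹ * ((2 * (n : ℝ≥0∞) + 1) * r ^ n) := by ring
  refine ne_top_of_le_ne_top ?_ hle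
  have hrt : r ≠ ⊤ := ne_top_of_lt (lt_of_lt_of_le hr1 le_top)
  set r' : ℝ≥0 := r.toNNReal with hr'
  have hrr : r = (r' : ℝ≥0∞) := (ENNReal.coe_toNNReal hrt).symm
  have hr'1 : (r' : ℝ) < 1 := by
    have : (r' : ℝ≥0∞) < 1 := hrr ▸ hr1
    exact_mod_cast this
  have hr'0 : (0:ℝ) ≤ (r' : ℝ) := r'.coe_nonneg
  have hnorm : ‖(r' : ℝ)‖ < 1 := by rwa [Real.norm_of_nonneg hr'0]
  have hs1 : Summable (fun n : ℕ => (n : ℝ) ^ 1 * (r' : ℝ) ^ n) :=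
    summable_pow_mul_geometric_of_norm_lt_one 1 hnorm
  have hs0 : Summable (fun n : ℕ => (r' : ℝ) ^ n) := summable_geometric_of_norm_lt_one hnorm
  have hsR : Summable (fun n : ℕ => (2 * (n : ℝ) + 1) * (r' : ℝ) ^ n) := by
    refine Summable.congr ((hs1.mul_left 2).add hs0) fun n => ?_
    ring
  have hsN : Summable (fun n : ℕ => (2 * (n : ℝ≥0) + 1) * r' ^ n) := by
    rw [← NNReal.summable_coe]
    refine hsR.congr fun n => ?_
    push_cast
    ring
  have hcoe : ∀ n : ℕ, (2 * (n : ℝ≥0∞) + 1) * r ^ n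
      = (((2 * (n : ℝ≥0) + 1) * r' ^ n : ℝ≥0) : ℝ≥0∞) := by
    intro n
    rw [hrr]
    push_cast
    ring
  have htop : (∑' n : ℕ, (2 * (n : ℝ≥0∞) + 1) * r ^ n) ≠ ⊤ := by
    rw [tsum_congr hcoe]
    exact ENNReal.tsum_coe_ne_top_iff_summable.2 hsN
  exact ENNReal.mul_ne_top (ENNReal.inv_ne_top.2 hρ0) htop

theorem variance_hitTime (μ : Measure (ℕ → ℝ)) (hμ : IsIIDUniform μ)
    (k : ℕ) (hk : 1 ≤ k) (σ : Equiv.Perm (Fin k)) :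
    MemLp (fun x => (hitTime σ x : ℝ)) 2 μ ∧
    variance (fun x => (hitTime σ x : ℝ)) μ =
      2 * (∑' n : ℕ, (avoidCount σ (n + 1) : ℝ) / n.factorial)
        + (∑' n : ℕ, (avoidCount σ n : ℝ) / n.factorial)
        - (∑' n : ℕ, (avoidCount σ n : ℝ) / n.factorial) ^ 2 := by
  haveI : IsProbabilityMeasure μ := hμ.1
  set T := hitTime σ with hT
  have hTmeas : Measurable T := measurable_hitTime σ
  have hXmeas : Measurable fun x => (T x : ℝ) := measurable_from_nat.comp hTmeas
  set G : ℕ → ℝ≥0∞ := fun n => μ {x : ℕ → ℝ | n < T x} with hG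
  have hGval : ∀ n, G n = (avoidCount σ n : ℝ≥0∞) * ((n.factorial : ℝ≥0∞))⁻¹ := mu_gt hμ σ hk
  have hGne : ∀ n, G n ≠ ⊤ := fun n => by
    rw [hGval n]
    exact ENNReal.mul_ne_top (ENNReal.natCast_ne_top _)
      (ENNReal.inv_ne_top.2 (by exact_mod_cast Nat.cast_ne_zero.2 n.factorial_ne_zero))
  have hS2 : ∫⁻ x, ((T x : ℝ≥0∞)) ^ 2 ∂μ = ∑' n : ℕ, (2 * (n : ℝ≥0∞) + 1) * G n :=
    lintegral_hitTime_sq μ T hTmeas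
  have hS2fin : ∑' n : ℕ, (2 * (n : ℝ≥0∞) + 1) * G n ≠ ⊤ := tail_sum_fin hμ σ hk
  have hS1 : ∫⁻ x, (T x : ℝ≥0∞) ∂μ = ∑' n : ℕ, G n := lintegral_hitTime μ T hTmeas
  have hS1fin : ∑' n : ℕ, G n ≠ ⊤ := by
    refine ne_top_of_le_ne_top hS2fin (ENNReal.tsum_le_tsum fun n => ?_)
    calc G n = 1 * G n := (one_mul _).symm
      _ ≤ (2 * (n : ℝ≥0∞) + 1) * G n :=
          mul_le_mul' (le_add_self) le_rfl
  -- Memℒp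
  have hmem : MemLp (fun x => (T x : ℝ)) 2 μ := by
    refine ⟨hXmeas.aestronglyMeasurable, ?_⟩
    rw [eLpNorm_eq_lintegral_rpow_enorm_toReal (by norm_num) (by norm_num)]
    have hto : ((2 : ℝ≥0∞).toReal) = ((2 : ℕ) : ℝ) := by norm_num
    rw [hto]
    have heq : ∀ x : ℕ → ℝ, (‖((T x : ℕ) : ℝ)‖ₑ) ^ (((2:ℕ) : ℝ))
        = ((T x : ℝ≥0∞)) ^ 2 := by
      intro x
      rw [ENNReal.rpow_natCast]
      congr 1
      simp
    rw [lintegral_congr heq, hS2]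
    exact ENNReal.rpow_lt_top_of_nonneg (by norm_num) hS2fin
  refine ⟨hmem, ?_⟩
  -- real-valued tail sums
  have hGtoReal : ∀ n : ℕ, (G n).toReal = (avoidCount σ n : ℝ) / n.factorial := by
    intro n
    rw [hGval n, ENNReal.toReal_mul, ENNReal.toReal_inv, ENNReal.toReal_natCast,
      ENNReal.toReal_natCast, div_eq_mul_inv]
  have hterm : ∀ n : ℕ, ((2 * (n : ℝ≥0∞) + 1) * G n).toReal
      = (2 * (n : ℝ) + 1) * ((avoidCount σ n : ℝ) / n.factorial) := by
    intro n
    have h2 : (2 * (n : ℝ≥0∞) + 1) = (((2 * n + 1 : ℕ)) : ℝ≥0∞) := by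
      push_cast
      try ring
    rw [ENNReal.toReal_mul, hGtoReal, h2, ENNReal.toReal_natCast]
    push_cast
    try ring
  have hint1 : ∫ x, (T x : ℝ) ∂μ = (∑' n : ℕ, G n).toReal := by
    rw [integral_eq_lintegral_of_nonneg_ae (Filter.Eventually.of_forall fun x => Nat.cast_nonneg _)
      hXmeas.aestronglyMeasurable]
    congr 1
    rw [← hS1]
    exact lintegral_congr fun x => by rw [ENNReal.ofReal_natCast]
  have hXsqmeas : AEStronglyMeasurable (fun x => ((T x : ℝ)) ^ 2) μ :=
    (hXmeas.pow_const 2).aestronglyMeasurable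
  have hint2 : ∫ x, ((T x : ℝ)) ^ 2 ∂μ = (∑' n : ℕ, (2 * (n : ℝ≥0∞) + 1) * G n).toReal := by
    rw [integral_eq_lintegral_of_nonneg_ae (Filter.Eventually.of_forall fun x => sq_nonneg _)
      hXsqmeas]
    congr 1
    rw [← hS2]
    refine lintegral_congr fun x => ?_
    rw [ENNReal.ofReal_pow (Nat.cast_nonneg _), ENNReal.ofReal_natCast]
  have hsum1 : (∑' n : ℕ, G n).toReal = ∑' n : ℕ, (avoidCount σ n : ℝ) / n.factorial := by
    rw [ENNReal.tsum_toReal_eq hGne]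
    exact tsum_congr hGtoReal
  have hterm_ne : ∀ n : ℕ, (2 * (n : ℝ≥0∞) + 1) * G n ≠ ⊤ := fun n =>
    ENNReal.mul_ne_top (by
      have h2 : (2 * (n : ℝ≥0∞) + 1) = (((2 * n + 1 : ℕ)) : ℝ≥0∞) := by
        push_cast
        try ring
      rw [h2]
      exact ENNReal.natCast_ne_top _) (hGne n)
  have hsum2 : (∑' n : ℕ, (2 * (n : ℝ≥0∞) + 1) * G n).toReal
      = ∑' n : ℕ, (2 * (n : ℝ) + 1) * ((avoidCount σ n : ℝ) / n.factorial) := by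
    rw [ENNReal.tsum_toReal_eq hterm_ne]
    exact tsum_congr hterm
  -- summabilities
  have hsummable2 : Summable (fun n : ℕ => (2 * (n : ℝ) + 1) * ((avoidCount σ n : ℝ) / n.factorial)) :=
    (ENNReal.summable_toReal hS2fin).congr hterm
  have hA : Summable (fun n : ℕ => (avoidCount σ n : ℝ) / n.factorial) :=
    (ENNReal.summable_toReal hS1fin).congr hGtoReal
  have hnA : Summable (fun n : ℕ => (n : ℝ) * ((avoidCount σ n : ℝ) / n.factorial)) := by
    refine ((hsummable2.sub hA).div_const 2).congr fun n => ?_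
    ring
  have hsplit : ∑' n : ℕ, (2 * (n : ℝ) + 1) * ((avoidCount σ n : ℝ) / n.factorial)
      = 2 * (∑' n : ℕ, (n : ℝ) * ((avoidCount σ n : ℝ) / n.factorial))
        + ∑' n : ℕ, (avoidCount σ n : ℝ) / n.factorial := by
    rw [← tsum_mul_left, ← Summable.tsum_add (hnA.mul_left 2) hA]
    exact tsum_congr fun n => by ring
  have hshift : ∑' n : ℕ, (n : ℝ) * ((avoidCount σ n : ℝ) / n.factorial)
      = ∑' n : ℕ, (avoidCount σ (n + 1) : ℝ) / n.factorial := by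
    rw [Summable.tsum_eq_zero_add hnA]
    simp only [Nat.cast_zero, zero_mul, zero_add]
    refine tsum_congr fun n => ?_
    have hne : ((n : ℝ) + 1) ≠ 0 := by positivity
    have hf : (n.factorial : ℝ) ≠ 0 := by exact_mod_cast n.factorial_ne_zero
    rw [Nat.factorial_succ]
    push_cast
    field_simp
  -- variance
  have hvar := variance_eq_sub (X := fun x => (T x : ℝ)) (μ := μ) hmem
  have hpow : (fun x => ((T x : ℝ))) ^ 2 = fun x => ((T x : ℝ)) ^ 2 := by
    funext x; simp
  rw [hvar, hpow, hint1, hint2, hsum1, hsum2, hsplit, hshift]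
  try ring

end
end

section
/- Let k ≥ 2, let 21 denote the pattern (2,1) ∈ S_2, and let A be the event {X_1 < X_2 < ⋯ < X_k}, which has μ(A) = 1/k!. Then the conditional expectation of the number of further draws needed to see 21 given that the sequence starts with an increasing run of length k satisfies (1/μ(A)) ∫_A (T_{21} − k) dμ = k!·(e − Σ_{i=0}^{k−1} 1/i!). -/
open MeasureTheory ProbabilityTheory Real

noncomputable section

namespace IotaAux
open Set

def unif : Measure ℝ := (volume : Measure ℝ).restrict (Set.Icc 0 1)

instance : IsProbabilityMeasure unif :=
  ⟨by simp [unif, Real.volume_Icc]⟩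

instance : NullSingletonClass unif := by unfold unif; infer_instance

def nu (n : ℕ) : Measure (Fin n → ℝ) := Measure.pi fun _ : Fin n => unif

instance (n : ℕ) : IsProbabilityMeasure (nu n) := by
  unfold nu; infer_instance

lemma map_comp_perm (n : ℕ) (e : Equiv.Perm (Fin n)) :
    (nu n).map (fun y => y ∘ e) = nu n := by
  have hm : Measurable (fun y : Fin n → ℝ => y ∘ e) :=
    measurable_pi_lambda _ (fun i => measurable_pi_apply (e i))
  show (nu n).map (fun y => y ∘ e) = Measure.pi fun _ : Fin n => unif
  refine (Measure.pi_eq (μ := fun _ : Fin n => unif) fun s hs => ?_).symm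
  rw [Measure.map_apply hm (MeasurableSet.univ_pi hs)]
  have hpre : (fun y : Fin n → ℝ => y ∘ e) ⁻¹' (Set.pi Set.univ s) =
      Set.pi Set.univ (fun j => s (e.symm j)) := by
    ext y
    simp only [Set.mem_preimage, Set.mem_pi, Set.mem_univ, forall_true_left, Function.comp]
    constructor
    · intro h j; simpa using h (e.symm j)
    · intro h i; simpa using h (e i)
  rw [hpre]
  show Measure.pi (fun _ => unif) _ = _
  rw [Measure.pi_pi]
  exact Equiv.prod_comp e.symm fun j => unif (s j)

lemma eval_null (n : ℕ) (i j : Fin n) (hij : i ≠ j) :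
    nu n {y | y i = y j} = 0 := by
  classical
  set p : Fin n → Prop := fun a => a ≠ j with hp
  have hjp : ¬ p j := by simp [hp]
  have hip : p i := hij
  set E := MeasurableEquiv.piEquivPiSubtypeProd (fun _ : Fin n => ℝ) p with hE
  have hmp : MeasurePreserving E (nu n)
      ((Measure.pi fun _ : Subtype p => unif).prod (Measure.pi fun _ : {a // ¬ p a} => unif)) :=
    MeasureTheory.measurePreserving_piEquivPiSubtypeProd (fun _ : Fin n => unif) p
  set S : Set ((Subtype p → ℝ) × ({a // ¬ p a} → ℝ)) :=
    {w | w.2 ⟨j, hjp⟩ = w.1 ⟨i, hip⟩} with hS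
  have hSm : MeasurableSet S := by
    apply measurableSet_eq_fun
    · exact (measurable_pi_apply _).comp measurable_snd
    · exact (measurable_pi_apply _).comp measurable_fst
  have hpre : {y : Fin n → ℝ | y i = y j} = E ⁻¹' S := by
    ext y
    simp [hS, hE, MeasurableEquiv.piEquivPiSubtypeProd, Equiv.piEquivPiSubtypeProd, eq_comm]
  rw [hpre, hmp.measure_preimage hSm.nullMeasurableSet]
  rw [Measure.prod_apply hSm]
  have h0 : ∀ u : Subtype p → ℝ,
      (Measure.pi fun _ : {a // ¬ p a} => unif) (Prod.mk u ⁻¹' S) = 0 := by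
    intro u
    have : Prod.mk u ⁻¹' S = {v : {a // ¬ p a} → ℝ | v ⟨j, hjp⟩ = u ⟨i, hip⟩} := rfl
    rw [this]
    exact Measure.pi_hyperplane _ _ _
  simp [h0]


lemma strictMono_measurableSet (n : ℕ) :
    MeasurableSet {y : Fin n → ℝ | StrictMono y} := by
  have : {y : Fin n → ℝ | StrictMono y} =
      ⋂ (a : Fin n) (b : Fin n) (_ : a < b), {y : Fin n → ℝ | y a < y b} := by
    ext y; simp [StrictMono, Set.mem_iInter]
  rw [this]
  refine MeasurableSet.iInter fun a => MeasurableSet.iInter fun b => MeasurableSet.iInter fun _ => ?_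
  exact measurableSet_lt (measurable_pi_apply a) (measurable_pi_apply b)

lemma perm_eq_refl_of_strictMono {n : ℕ} (pp : Equiv.Perm (Fin n)) (h : StrictMono ⇑pp) :
    pp = Equiv.refl (Fin n) := by
  have hsymm : StrictMono ⇑pp.symm := by
    intro a b hab
    have := h.lt_iff_lt (a := pp.symm a) (b := pp.symm b)
    simpa using this.mp (by simpa using hab)
  ext a
  haveI : WellFoundedLT (Fin n) := inferInstance
  have h1 : a ≤ pp a := h.le_apply
  have h2 : pp a ≤ pp.symm (pp a) := hsymm.le_apply
  simp only [Equiv.symm_apply_apply] at h2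
  exact le_antisymm h2 h1

lemma nu_strictMono (n : ℕ) :
    nu n {y : Fin n → ℝ | StrictMono y} = ((n.factorial : ENNReal))⁻¹ := by
  classical
  set E0 : Set (Fin n → ℝ) := {y | StrictMono y} with hE0
  set E : Equiv.Perm (Fin n) → Set (Fin n → ℝ) := fun σ => (fun y => y ∘ σ) ⁻¹' E0 with hE
  have hmeas : ∀ σ : Equiv.Perm (Fin n), Measurable (fun y : Fin n → ℝ => y ∘ σ) := fun σ =>
    measurable_pi_lambda _ (fun i => measurable_pi_apply (σ i))
  have hEm : ∀ σ, MeasurableSet (E σ) := fun σ => (hmeas σ) (strictMono_measurableSet n)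
  have hEμ : ∀ σ, nu n (E σ) = nu n E0 := by
    intro σ
    rw [hE]
    rw [← Measure.map_apply (hmeas σ) (strictMono_measurableSet n), map_comp_perm]
  -- disjointness
  have hdisj : Pairwise (Function.onFun Disjoint E) := by
    intro σ σ' hne
    rw [Function.onFun, Set.disjoint_left]
    intro y hy hy'
    apply hne
    have hyσ : StrictMono (y ∘ σ) := hy
    have hyσ' : StrictMono (y ∘ σ') := hy'
    set pp : Equiv.Perm (Fin n) := σ'.trans σ.symm with hpp
    have hcomp : (y ∘ σ) ∘ pp = y ∘ σ' := by
      funext a; simp [hpp, Function.comp]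
    have hppmono : StrictMono ⇑pp := by
      intro a b hab
      have : (y ∘ σ) (pp a) < (y ∘ σ) (pp b) := by
        rw [show ((y ∘ σ) (pp a)) = (y ∘ σ') a from congrFun hcomp a,
          show ((y ∘ σ) (pp b)) = (y ∘ σ') b from congrFun hcomp b]
        exact hyσ' hab
      exact hyσ.lt_iff_lt.mp this
    have := perm_eq_refl_of_strictMono pp hppmono
    have hσσ' : σ' = σ := by
      ext a
      have : pp a = a := by rw [this]; rfl
      have h4 := congrArg σ this
      have h3 : σ' a = σ a := by simpa [hpp] using h4
      exact congrArg Fin.val h3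
    exact hσσ'.symm
  -- the union has full measure
  have hcover : (⋃ σ : Equiv.Perm (Fin n), E σ)ᶜ ⊆
      ⋃ (i : Fin n) (j : Fin n) (_ : i ≠ j), {y : Fin n → ℝ | y i = y j} := by
    intro y hy
    by_contra hni
    simp only [Set.mem_iUnion, not_exists] at hni
    have hinj : Function.Injective y := by
      intro a b hab
      by_contra hne
      exact hni a b hne hab
    apply hy
    have hmono : Monotone (y ∘ Tuple.sort y) := Tuple.monotone_sort y
    have hsm : StrictMono (y ∘ Tuple.sort y) :=
      hmono.strictMono_of_injective (hinj.comp (Tuple.sort y).injective)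
    exact Set.mem_iUnion.mpr ⟨Tuple.sort y, hsm⟩
  have hnull : nu n (⋃ σ : Equiv.Perm (Fin n), E σ)ᶜ = 0 := by
    refine measure_mono_null hcover ?_
    refine measure_iUnion_null fun i => measure_iUnion_null fun j => measure_iUnion_null fun hij => ?_
    exact eval_null n i j hij
  have hfull : nu n (⋃ σ : Equiv.Perm (Fin n), E σ) = 1 := by
    have h1 : (1 : ENNReal) = nu n Set.univ := (measure_univ).symm
    have := measure_union_add_inter (μ := nu n) (s := ⋃ σ, E σ) (t := (⋃ σ, E σ)ᶜ) (MeasurableSet.compl (MeasurableSet.iUnion hEm))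
    have hle : (1 : ENNReal) ≤ nu n (⋃ σ, E σ) + nu n (⋃ σ, E σ)ᶜ := by
      rw [h1, ← Set.union_compl_self (⋃ σ, E σ)]
      exact measure_union_le _ _
    rw [hnull, add_zero] at hle
    exact le_antisymm prob_le_one hle
  have hsum : nu n (⋃ σ : Equiv.Perm (Fin n), E σ) =
      ∑' σ : Equiv.Perm (Fin n), nu n (E σ) := measure_iUnion hdisj hEm
  rw [hsum] at hfull
  simp only [hEμ] at hfull
  rw [tsum_fintype, Finset.sum_const, Finset.card_univ, Fintype.card_perm, Fintype.card_fin] at hfull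
  have hfac : ((n.factorial : ENNReal)) ≠ 0 := by
    exact_mod_cast Nat.cast_ne_zero.mpr n.factorial_ne_zero
  have hfac' : ((n.factorial : ENNReal)) ≠ ⊤ := ENNReal.natCast_ne_top _
  rw [nsmul_eq_mul] at hfull
  calc nu n E0 = ((n.factorial : ENNReal))⁻¹ * ((n.factorial : ENNReal) * nu n E0) := by
        rw [← mul_assoc, ENNReal.inv_mul_cancel hfac hfac', one_mul]
    _ = ((n.factorial : ENNReal))⁻¹ := by rw [hfull, mul_one]


/-! ### The sequence space -/

def proj (n : ℕ) : (ℕ → ℝ) → (Fin n → ℝ) := fun x i => x i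

lemma measurable_proj (n : ℕ) : Measurable (proj n) :=
  measurable_pi_lambda _ fun i => measurable_pi_apply _

def Bset (n : ℕ) : Set (ℕ → ℝ) := {x | ∀ i j : ℕ, i < j → j < n → x i < x j}

def Cset (n : ℕ) : Set (ℕ → ℝ) := {x | ∀ i : ℕ, i + 1 < n → x i ≤ x (i + 1)}

def diag : Set (ℕ → ℝ) := ⋃ (i : ℕ) (j : ℕ) (_ : i ≠ j), {x | x i = x j}

lemma measurableSet_Bset (n : ℕ) : MeasurableSet (Bset n) := by
  have : Bset n = ⋂ (i : ℕ) (j : ℕ) (_ : i < j) (_ : j < n), {x : ℕ → ℝ | x i < x j} := by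
    ext x; simp [Bset, Set.mem_iInter]
  rw [this]
  exact MeasurableSet.iInter fun i => MeasurableSet.iInter fun j => MeasurableSet.iInter fun _ =>
    MeasurableSet.iInter fun _ => measurableSet_lt (measurable_pi_apply i) (measurable_pi_apply j)

lemma measurableSet_Cset (n : ℕ) : MeasurableSet (Cset n) := by
  have : Cset n = ⋂ (i : ℕ) (_ : i + 1 < n), {x : ℕ → ℝ | x i ≤ x (i + 1)} := by
    ext x; simp [Cset, Set.mem_iInter]
  rw [this]
  exact MeasurableSet.iInter fun i => MeasurableSet.iInter fun _ =>
    measurableSet_le (measurable_pi_apply i) (measurable_pi_apply (i + 1))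

lemma Bset_eq_preimage (n : ℕ) :
    Bset n = proj n ⁻¹' {y : Fin n → ℝ | StrictMono y} := by
  ext x
  simp only [Bset, Set.mem_setOf_eq, Set.mem_preimage, proj]
  constructor
  · intro h a b hab
    exact h a b (by exact_mod_cast hab) b.isLt
  · intro h i j hij hjn
    exact h (a := ⟨i, lt_trans hij hjn⟩) (b := ⟨j, hjn⟩) (by simpa using hij)

lemma measure_Bset (μ : Measure (ℕ → ℝ)) (hμ : IsIIDUniform μ) (n : ℕ) :
    μ (Bset n) = ((n.factorial : ENNReal))⁻¹ := by
  rw [Bset_eq_preimage, ← Measure.map_apply (measurable_proj n) (strictMono_measurableSet n)]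
  have : μ.map (proj n) = nu n := hμ.2 n
  rw [this, nu_strictMono]

lemma measure_pair_eq (μ : Measure (ℕ → ℝ)) (hμ : IsIIDUniform μ) (i j : ℕ) (hij : i ≠ j) :
    μ {x : ℕ → ℝ | x i = x j} = 0 := by
  set n := max i j + 1 with hn
  have hi : i < n := lt_of_le_of_lt (le_max_left i j) (Nat.lt_succ_self _)
  have hj : j < n := lt_of_le_of_lt (le_max_right i j) (Nat.lt_succ_self _)
  have hpre : {x : ℕ → ℝ | x i = x j} =
      proj n ⁻¹' {y : Fin n → ℝ | y ⟨i, hi⟩ = y ⟨j, hj⟩} := rfl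
  have hms : MeasurableSet {y : Fin n → ℝ | y ⟨i, hi⟩ = y ⟨j, hj⟩} := by
    apply measurableSet_eq_fun
    · exact measurable_pi_apply _
    · exact measurable_pi_apply _
  rw [hpre, ← Measure.map_apply (measurable_proj n) hms]
  have : μ.map (proj n) = nu n := hμ.2 n
  rw [this]
  refine eval_null n ⟨i, hi⟩ ⟨j, hj⟩ ?_
  simpa [Fin.ext_iff] using hij

lemma measure_diag (μ : Measure (ℕ → ℝ)) (hμ : IsIIDUniform μ) : μ diag = 0 := by
  refine measure_iUnion_null fun i => measure_iUnion_null fun j => measure_iUnion_null fun hij => ?_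
  exact measure_pair_eq μ hμ i j hij

lemma Cset_weak_mono {n : ℕ} {x : ℕ → ℝ} (hx : x ∈ Cset n) :
    ∀ i j : ℕ, i ≤ j → j < n → x i ≤ x j := by
  intro i j hij hjn
  induction j with
  | zero => simp [Nat.le_zero.mp hij]
  | succ m ih =>
    rcases Nat.lt_or_ge i (m + 1) with h | h
    · exact le_trans (ih (Nat.lt_succ_iff.mp h) (lt_trans (Nat.lt_succ_self m) hjn))
        (hx m hjn)
    · have : i = m + 1 := le_antisymm hij h
      simp [this]

lemma Cset_diff_Bset (n : ℕ) : Cset n \ Bset n ⊆ diag := by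
  rintro x ⟨hxC, hxB⟩
  simp only [Bset, Set.mem_setOf_eq, not_forall] at hxB
  obtain ⟨i, j, hij, hjn, hnlt⟩ := hxB
  have hle : x i ≤ x j := Cset_weak_mono hxC i j (le_of_lt hij) hjn
  have : x i = x j := le_antisymm hle (not_lt.mp hnlt)
  exact Set.mem_iUnion.mpr ⟨i, Set.mem_iUnion.mpr ⟨j, Set.mem_iUnion.mpr ⟨Nat.ne_of_lt hij, this⟩⟩⟩

lemma Bset_subset_Cset (n : ℕ) : Bset n ⊆ Cset n := by
  intro x hx i hi
  exact le_of_lt (hx i (i + 1) (Nat.lt_succ_self i) hi)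

lemma Bset_mono {m n : ℕ} (h : m ≤ n) : Bset n ⊆ Bset m := by
  intro x hx i j hij hj
  exact hx i j hij (lt_of_lt_of_le hj h)

/-! ### Hitting time of the pattern 21 -/

section HitTime

variable (τ : Equiv.Perm (Fin 2)) (hτ : τ 0 = 1 ∧ τ 1 = 0)

include hτ

lemma occ_iff (x : ℕ → ℝ) (i : ℕ) :
    OccursAt τ x i ↔ x (i + 1) < x i := by
  obtain ⟨h0, h1⟩ := hτ
  have ht : τ 1 < τ 0 := by rw [h0, h1]; decide
  constructor
  · intro h
    have h2 := (h 1 0).mpr ht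
    simpa [Fin.val_one, Fin.val_zero] using h2
  · intro h
    unfold OccursAt
    simp only [Fin.forall_fin_two, Fin.val_zero, Fin.val_one, add_zero, h0, h1]
    refine ⟨⟨by simp, ?_⟩, ?_, by simp⟩
    · constructor
      · intro hh; exact absurd hh (lt_asymm h)
      · intro hh; exact absurd hh (by decide)
    · constructor
      · intro _; decide
      · intro _; exact h

def hitSet (x : ℕ → ℝ) : Set ℕ := {j | 2 ≤ j ∧ OccursAt τ x (j - 2)}

omit hτ in
lemma hitTime_eq (x : ℕ → ℝ) : hitTime τ x = sInf (hitSet τ x) := rfl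

lemma mem_hitSet_iff (x : ℕ → ℝ) (j : ℕ) :
    j ∈ hitSet τ x ↔ 2 ≤ j ∧ x (j - 1) < x (j - 2) := by
  unfold hitSet
  constructor
  · rintro ⟨h2, hocc⟩
    refine ⟨h2, ?_⟩
    have := (occ_iff τ hτ x (j - 2)).mp hocc
    have hj : j - 2 + 1 = j - 1 := by omega
    rwa [hj] at this
  · rintro ⟨h2, hlt⟩
    refine ⟨h2, (occ_iff τ hτ x (j - 2)).mpr ?_⟩
    have hj : j - 2 + 1 = j - 1 := by omega
    rwa [hj]

def Dset : Set (ℕ → ℝ) := {x | ∀ i : ℕ, x i ≤ x (i + 1)}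

omit hτ in
lemma measurableSet_Dset : MeasurableSet (Dset) := by
  have : Dset = ⋂ (i : ℕ), {x : ℕ → ℝ | x i ≤ x (i + 1)} := by
    ext x; simp [Dset, Set.mem_iInter]
  rw [this]
  exact MeasurableSet.iInter fun i =>
    measurableSet_le (measurable_pi_apply i) (measurable_pi_apply (i + 1))

lemma hitSet_empty_iff (x : ℕ → ℝ) : hitSet τ x = ∅ ↔ x ∈ Dset := by
  constructor
  · intro h i
    by_contra hlt
    push_neg at hlt
    have : (i + 2) ∈ hitSet τ x := by
      rw [mem_hitSet_iff τ hτ]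
      constructor
      · omega
      · have h1 : i + 2 - 1 = i + 1 := by omega
        have h2 : i + 2 - 2 = i := by omega
        rw [h1, h2]; exact hlt
    rw [h] at this
    exact this
  · intro hx
    ext j
    simp only [Set.mem_empty_iff_false, iff_false]
    rw [mem_hitSet_iff τ hτ]
    rintro ⟨h2, hlt⟩
    have := hx (j - 2)
    have hj : j - 2 + 1 = j - 1 := by omega
    rw [hj] at this
    exact absurd hlt (not_lt.mpr this)

omit hτ in
lemma Dset_subset_Cset (n : ℕ) : Dset ⊆ Cset n := fun x hx i _ => hx i

omit hτ in
lemma measure_Dset (μ : Measure (ℕ → ℝ)) (hμ : IsIIDUniform μ) : μ Dset = 0 := by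
  have hbound : ∀ n : ℕ, μ Dset ≤ ((n.factorial : ENNReal))⁻¹ := by
    intro n
    calc μ Dset ≤ μ (Cset n) := measure_mono (Dset_subset_Cset n)
      _ ≤ μ (Bset n) + μ (Cset n \ Bset n) := by
          have hsub : Cset n ⊆ Bset n ∪ (Cset n \ Bset n) := by
            intro x hx
            by_cases h : x ∈ Bset n
            · exact Set.mem_union_left _ h
            · exact Set.mem_union_right _ ⟨hx, h⟩
          exact le_trans (measure_mono hsub) (measure_union_le _ _)
      _ = ((n.factorial : ENNReal))⁻¹ := by
          rw [measure_Bset μ hμ, measure_mono_null (Cset_diff_Bset n) (measure_diag μ hμ),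
            add_zero]
  have htend : Filter.Tendsto (fun n : ℕ => ((n.factorial : ENNReal))⁻¹)
      Filter.atTop (nhds 0) := by
    have h1 : Filter.Tendsto (fun n : ℕ => ((n : ENNReal))⁻¹) Filter.atTop (nhds 0) :=
      ENNReal.tendsto_inv_nat_nhds_zero
    refine tendsto_of_tendsto_of_tendsto_of_le_of_le tendsto_const_nhds h1
      (fun n => zero_le) (fun n => ?_)
    exact ENNReal.inv_le_inv' (by exact_mod_cast Nat.self_le_factorial n)
  have := ge_of_tendsto' htend hbound
  exact le_antisymm this zero_le

lemma hit_ge_iff (x : ℕ → ℝ) (hx : x ∉ Dset) (N : ℕ) :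
    N + 1 ≤ hitTime τ x ↔ x ∈ Cset N := by
  have hne : (hitSet τ x).Nonempty := by
    rw [Set.nonempty_iff_ne_empty]
    intro h
    exact hx ((hitSet_empty_iff τ hτ x).mp h)
  rw [hitTime_eq]
  constructor
  · intro h i hi
    by_contra hlt
    push_neg at hlt
    have hmem : (i + 2) ∈ hitSet τ x := by
      rw [mem_hitSet_iff τ hτ]
      refine ⟨by omega, ?_⟩
      have h1 : i + 2 - 1 = i + 1 := by omega
      have h2 : i + 2 - 2 = i := by omega
      rw [h1, h2]; exact hlt
    have := Nat.sInf_le hmem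
    omega
  · intro hC
    by_contra h
    push_neg at h
    have hmem := Nat.sInf_mem hne
    rw [mem_hitSet_iff τ hτ] at hmem
    obtain ⟨h2, hlt⟩ := hmem
    set j := sInf (hitSet τ x) with hj
    have hjN : j - 2 + 1 < N := by omega
    have := hC (j - 2) hjN
    have hj1 : j - 2 + 1 = j - 1 := by omega
    rw [hj1] at this
    exact absurd hlt (not_lt.mpr this)

lemma measurable_hitTime : Measurable (hitTime τ) := by
  apply measurable_to_countable'
  intro m
  have hMj : ∀ j : ℕ, MeasurableSet {x : ℕ → ℝ | j ∈ hitSet τ x} := by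
    intro j
    by_cases h2 : 2 ≤ j
    · have : {x : ℕ → ℝ | j ∈ hitSet τ x} = {x | x (j - 1) < x (j - 2)} := by
        ext x; rw [Set.mem_setOf_eq, mem_hitSet_iff τ hτ]; simp [h2]
      rw [this]
      exact measurableSet_lt (measurable_pi_apply _) (measurable_pi_apply _)
    · have : {x : ℕ → ℝ | j ∈ hitSet τ x} = ∅ := by
        ext x; rw [Set.mem_setOf_eq, mem_hitSet_iff τ hτ]; simp [h2]
      rw [this]; exact MeasurableSet.empty
  have hkey : hitTime τ ⁻¹' {m} =
      ({x : ℕ → ℝ | m ∈ hitSet τ x} ∩ ⋂ (j : ℕ) (_ : j < m), {x | j ∈ hitSet τ x}ᶜ) ∪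
        (if m = 0 then Dset else ∅) := by
    ext x
    simp only [Set.mem_preimage, Set.mem_singleton_iff, Set.mem_union, Set.mem_inter_iff,
      Set.mem_iInter, Set.mem_compl_iff, Set.mem_setOf_eq]
    rw [hitTime_eq]
    constructor
    · intro h
      by_cases hne : (hitSet τ x).Nonempty
      · left
        refine ⟨h ▸ Nat.sInf_mem hne, fun j hj => Nat.notMem_of_lt_sInf (h ▸ hj)⟩
      · right
        rw [Set.not_nonempty_iff_eq_empty] at hne
        have hm0 : m = 0 := by rw [← h, hne, Nat.sInf_empty]
        simp only [hm0, if_true]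
        exact (hitSet_empty_iff τ hτ x).mp hne
    · rintro (⟨hmem, hbelow⟩ | hD)
      · refine le_antisymm (Nat.sInf_le hmem) ?_
        by_contra hlt
        push_neg at hlt
        have hne : (hitSet τ x).Nonempty := ⟨m, hmem⟩
        exact hbelow _ hlt (Nat.sInf_mem hne)
      · by_cases hm : m = 0
        · simp only [hm, if_true] at hD
          have hemp : hitSet τ x = ∅ := (hitSet_empty_iff τ hτ x).mpr hD
          rw [hm, hemp, Nat.sInf_empty]
        · simp [hm] at hD
  rw [show (hitTime τ ⁻¹' {m}) = hitTime τ ⁻¹' {m} from rfl, hkey]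
  refine MeasurableSet.union ?_ ?_
  · exact (hMj m).inter (MeasurableSet.iInter fun j => MeasurableSet.iInter fun _ =>
      (hMj j).compl)
  · by_cases hm : m = 0
    · simp [hm, measurableSet_Dset]
    · simp [hm]

end HitTime

end IotaAux

theorem cond_exp_initial_iota_to_21 (μ : Measure (ℕ → ℝ)) (hμ : IsIIDUniform μ)
    (k : ℕ) (hk : 2 ≤ k) (τ : Equiv.Perm (Fin 2)) (hτ : τ 0 = 1 ∧ τ 1 = 0)
    (A : Set (ℕ → ℝ)) (hA : A = {x | ∀ i j : ℕ, i < j → j < k → x i < x j}) :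
    μ A = 1 / (k.factorial : ENNReal) ∧
    (1 / (μ A).toReal) * ∫ x in A, ((hitTime τ x : ℝ) - (k : ℝ)) ∂μ =
      (k.factorial : ℝ) * (Real.exp 1 - ∑ i ∈ Finset.range k, 1 / (i.factorial : ℝ)) := by
  classical
  haveI : IsProbabilityMeasure μ := hμ.1
  have hAB : A = IotaAux.Bset k := by rw [hA]; rfl
  have hAmeas : MeasurableSet A := hAB ▸ IotaAux.measurableSet_Bset k
  have hμA : μ A = ((k.factorial : ENNReal))⁻¹ := by
    rw [hAB]; exact IotaAux.measure_Bset μ hμ k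
  refine ⟨by rw [hμA, one_div], ?_⟩
  set T : (ℕ → ℝ) → ℕ := hitTime τ with hT
  set ρ := μ.restrict A with hρ
  have hDnull : μ IotaAux.Dset = 0 := IotaAux.measure_Dset μ hμ
  have hDnullρ : ρ IotaAux.Dset = 0 := by
    rw [hρ]
    exact le_antisymm (le_trans (Measure.restrict_apply_le _ _) hDnull.le) zero_le
  have haeD : ∀ᵐ x ∂ρ, x ∉ IotaAux.Dset := by
    rw [MeasureTheory.ae_iff]
    simpa using hDnullρ
  have haeA : ∀ᵐ x ∂ρ, x ∈ A := MeasureTheory.ae_restrict_mem hAmeas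
  have hTk : ∀ x, x ∈ A → x ∉ IotaAux.Dset → k + 1 ≤ T x := by
    intro x hxA hxD
    have hxC : x ∈ IotaAux.Cset k := IotaAux.Bset_subset_Cset k (hAB ▸ hxA)
    exact (IotaAux.hit_ge_iff τ hτ x hxD k).mpr hxC
  have hnonneg : 0 ≤ᵐ[ρ] fun x => (T x : ℝ) - (k : ℝ) := by
    filter_upwards [haeA, haeD] with x hxA hxD
    have h1 := hTk x hxA hxD
    have h2 : (k : ℝ) + 1 ≤ (T x : ℝ) := by exact_mod_cast h1
    simp only [Pi.zero_apply]
    linarith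
  have hTmeas : Measurable T := IotaAux.measurable_hitTime τ hτ
  have hmeasg : AEStronglyMeasurable (fun x => (T x : ℝ) - (k : ℝ)) ρ := by
    apply Measurable.aestronglyMeasurable
    exact (measurable_from_top.comp hTmeas).sub measurable_const
  rw [MeasureTheory.integral_eq_lintegral_of_nonneg_ae hnonneg hmeasg]
  set G : ℕ → Set (ℕ → ℝ) := fun m => IotaAux.Cset (k + m) ∩ (IotaAux.Dset)ᶜ with hG
  have hGmeas : ∀ m, MeasurableSet (G m) := fun m =>
    (IotaAux.measurableSet_Cset _).inter (IotaAux.measurableSet_Dset).compl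
  have hpt : ∀ᵐ x ∂ρ, ENNReal.ofReal ((T x : ℝ) - (k : ℝ)) =
      ∑' m : ℕ, (G m).indicator (fun _ => (1 : ENNReal)) x := by
    filter_upwards [haeA, haeD] with x hxA hxD
    have hk1 : k + 1 ≤ T x := hTk x hxA hxD
    have hcast : ENNReal.ofReal ((T x : ℝ) - (k : ℝ)) = ((T x - k : ℕ) : ENNReal) := by
      rw [show ((T x : ℝ) - (k : ℝ)) = ((T x - k : ℕ) : ℝ) by
        rw [Nat.cast_sub (by omega : k ≤ T x)]]
      exact ENNReal.ofReal_natCast _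
    have hind : ∀ m : ℕ, (G m).indicator (fun _ => (1 : ENNReal)) x
        = if k + m + 1 ≤ T x then 1 else 0 := by
      intro m
      by_cases hmem : x ∈ G m
      · have hle : k + m + 1 ≤ T x := (IotaAux.hit_ge_iff τ hτ x hxD (k + m)).mpr hmem.1
        rw [Set.indicator_of_mem hmem, if_pos hle]
      · have hnle : ¬ (k + m + 1 ≤ T x) := by
          intro hle
          exact hmem ⟨(IotaAux.hit_ge_iff τ hτ x hxD (k + m)).mp hle, hxD⟩
        rw [Set.indicator_of_notMem hmem, if_neg hnle]
    rw [hcast]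
    rw [tsum_congr hind]
    have hout : ∀ m ∉ Finset.range (T x - k),
        (if k + m + 1 ≤ T x then (1 : ENNReal) else 0) = 0 := by
      intro m hm
      rw [Finset.mem_range, not_lt] at hm
      exact if_neg (by omega)
    have hin : ∀ m ∈ Finset.range (T x - k),
        (if k + m + 1 ≤ T x then (1 : ENNReal) else 0) = 1 := by
      intro m hm
      rw [Finset.mem_range] at hm
      exact if_pos (by omega)
    rw [tsum_eq_sum hout, Finset.sum_congr rfl hin, Finset.sum_const, Finset.card_range,
      nsmul_eq_mul, mul_one]
  have hlin : ∫⁻ x, ENNReal.ofReal ((T x : ℝ) - (k : ℝ)) ∂ρ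
      = ∑' m : ℕ, ρ (G m) := by
    rw [lintegral_congr_ae hpt]
    have hswap := lintegral_tsum (μ := ρ)
      (f := fun m => (G m).indicator (fun _ => (1 : ENNReal)))
      (fun m => ((measurable_const.indicator (hGmeas m)).aemeasurable))
    rw [hswap]
    refine tsum_congr fun m => ?_
    rw [lintegral_indicator (hGmeas m)]
    simp
  have hGA : ∀ m : ℕ, ρ (G m) = (((k + m).factorial : ENNReal))⁻¹ := by
    intro m
    rw [hρ, Measure.restrict_apply (hGmeas m)]
    have h1 : μ ((G m ∩ A) \ IotaAux.Bset (k + m)) = 0 := by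
      apply measure_mono_null _ (IotaAux.measure_diag μ hμ)
      rintro x ⟨⟨⟨hxC, _⟩, _⟩, hxB⟩
      exact IotaAux.Cset_diff_Bset (k + m) ⟨hxC, hxB⟩
    have h2 : μ (IotaAux.Bset (k + m) \ (G m ∩ A)) = 0 := by
      apply measure_mono_null _ hDnull
      rintro x ⟨hxB, hxn⟩
      by_contra hxD
      apply hxn
      refine ⟨⟨IotaAux.Bset_subset_Cset _ hxB, hxD⟩, ?_⟩
      rw [hAB]
      exact IotaAux.Bset_mono (Nat.le_add_right k m) hxB
    have heq : μ (G m ∩ A) = μ (IotaAux.Bset (k + m)) :=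
      measure_congr ((MeasureTheory.ae_eq_set).mpr ⟨h1, h2⟩)
    rw [heq, IotaAux.measure_Bset μ hμ]
  have hlin2 : ∫⁻ x, ENNReal.ofReal ((T x : ℝ) - (k : ℝ)) ∂ρ
      = ∑' m : ℕ, (((k + m).factorial : ENNReal))⁻¹ := by
    rw [hlin]; exact tsum_congr hGA
  rw [hlin2]
  have htoReal : (∑' m : ℕ, (((k + m).factorial : ENNReal))⁻¹).toReal
      = ∑' m : ℕ, (((k + m).factorial : ℝ))⁻¹ := by
    rw [ENNReal.tsum_toReal_eq (fun m => ENNReal.inv_ne_top.mpr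
      (by exact_mod_cast Nat.cast_ne_zero.mpr (Nat.factorial_ne_zero _)))]
    refine tsum_congr fun m => ?_
    rw [ENNReal.toReal_inv, ENNReal.toReal_natCast]
  rw [htoReal]
  have hsummable : Summable (fun n : ℕ => ((n.factorial : ℝ))⁻¹) := by
    have := Real.summable_pow_div_factorial 1
    simpa [one_div] using this
  have hexp : Real.exp 1 = ∑' n : ℕ, ((n.factorial : ℝ))⁻¹ := by
    rw [Real.exp_eq_exp_ℝ, NormedSpace.exp_eq_tsum_div]
    refine tsum_congr fun n => ?_
    rw [one_pow, one_div]
  have hsplit : Real.exp 1 - ∑ i ∈ Finset.range k, 1 / (i.factorial : ℝ)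
      = ∑' m : ℕ, (((k + m).factorial : ℝ))⁻¹ := by
    have h := Summable.sum_add_tsum_nat_add (f := fun n : ℕ => ((n.factorial : ℝ))⁻¹) k hsummable
    have h2 : (∑' m : ℕ, (((m + k).factorial : ℝ))⁻¹)
        = ∑' m : ℕ, (((k + m).factorial : ℝ))⁻¹ :=
      tsum_congr fun m => by rw [add_comm]
    rw [hexp, ← h, ← h2]
    simp only [one_div]
    ring
  rw [hsplit]
  have hμAtoReal : (μ A).toReal = ((k.factorial : ℝ))⁻¹ := by
    rw [hμA, ENNReal.toReal_inv, ENNReal.toReal_natCast]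
  rw [hμAtoReal, one_div, inv_inv]

end
end

section
/- Let k ≥ 2, let ι_k = 12⋯k ∈ S_k be the increasing pattern, and let 21 = (2,1) ∈ S_2. Then the conditional expectation of the number of further draws needed to see 21 after the first occurrence of ι_k, given that ι_k occurs before 21, satisfies (1/μ(T_{ι_k} < T_{21})) ∫_{{T_{ι_k} < T_{21}}} (T_{21} − T_{ι_k}) dμ = k!·(e − Σ_{i=0}^{k−1} 1/i!). -/
open MeasureTheory ProbabilityTheory Real

noncomputable section

open Set
open scoped ENNReal NNReal

namespace CondExpAux


def ν : Measure ℝ := (volume : Measure ℝ).restrict (Set.Icc 0 1)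

instance : IsProbabilityMeasure ν := by
  constructor
  rw [ν, Measure.restrict_apply_univ, Real.volume_Icc]
  norm_num

def P (n : ℕ) : Measure (Fin n → ℝ) := Measure.pi (fun _ => ν)

instance (n : ℕ) : IsProbabilityMeasure (P n) := by
  unfold P; infer_instance

lemma nu_singleton (c : ℝ) : ν {c} = 0 := by
  have : ν {c} ≤ volume {c} := by
    rw [ν, Measure.restrict_apply (measurableSet_singleton c)]
    exact measure_mono Set.inter_subset_left
  simpa [Real.volume_singleton] using le_antisymm (by simpa using this) zero_le

lemma pair_null {n : ℕ} {i j : Fin n} (hij : i ≠ j) :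
    P n {y | y i = y j} = 0 := by
  cases n with
  | zero => exact absurd i.pos (by omega)
  | succ N =>
    obtain ⟨j', hj'⟩ := Fin.exists_succAbove_eq (show j ≠ i from hij.symm)
    set e := MeasurableEquiv.piFinSuccAbove (fun _ : Fin (N+1) => ℝ) i
    have mp : MeasurePreserving e (P (N+1)) (ν.prod (P N)) :=
      measurePreserving_piFinSuccAbove (fun _ => ν) i
    have hW : MeasurableSet {p : ℝ × (Fin N → ℝ) | p.1 = p.2 j'} :=
      measurableSet_eq_fun measurable_fst ((measurable_pi_apply j').comp measurable_snd)
    have hpre : {y : Fin (N+1) → ℝ | y i = y j} =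
        e ⁻¹' {p : ℝ × (Fin N → ℝ) | p.1 = p.2 j'} := by
      ext y
      simp only [Set.mem_setOf_eq, Set.mem_preimage]
      have h1 : (e y).1 = y i := rfl
      have h2 : (e y).2 j' = y (i.succAbove j') := rfl
      rw [h1, h2, hj']
    rw [hpre, mp.measure_preimage hW.nullMeasurableSet]
    rw [Measure.prod_apply_symm hW]
    simp [nu_singleton]

/-- the increasing cone -/
def IncF (n : ℕ) : Set (Fin n → ℝ) := {y | ∀ a b : Fin n, a < b → y a < y b}

/-- sorted via permutation g -/
def SP {n : ℕ} (g : Equiv.Perm (Fin n)) : Set (Fin n → ℝ) :=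
  {y | ∀ a b : Fin n, a < b → y (g a) < y (g b)}

lemma SP_one (n : ℕ) : SP (1 : Equiv.Perm (Fin n)) = IncF n := by
  simp [SP, IncF]

def NonInj (n : ℕ) : Set (Fin n → ℝ) := {y | ∃ a b : Fin n, a ≠ b ∧ y a = y b}

lemma measurable_SP {n : ℕ} (g : Equiv.Perm (Fin n)) : MeasurableSet (SP g) := by
  have : SP g = ⋂ (a : Fin n) (b : Fin n) (_ : a < b), {y : Fin n → ℝ | y (g a) < y (g b)} := by
    ext y; simp [SP]
  rw [this]
  exact MeasurableSet.iInter fun a => MeasurableSet.iInter fun b => MeasurableSet.iInter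
    fun _ => measurableSet_lt (measurable_pi_apply _) (measurable_pi_apply _)

lemma noninj_null (n : ℕ) : P n (NonInj n) = 0 := by
  have : NonInj n ⊆ ⋃ (p : Fin n × Fin n) (_ : p.1 ≠ p.2), {y : Fin n → ℝ | y p.1 = y p.2} := by
    rintro y ⟨a, b, hab, hy⟩
    exact Set.mem_iUnion.2 ⟨(a, b), Set.mem_iUnion.2 ⟨hab, hy⟩⟩
  exact measure_mono_null this
    (measure_iUnion_null fun p => measure_iUnion_null fun hp => pair_null hp)

/-- measure-preserving right-composition with a permutation -/
lemma P_comp_perm {n : ℕ} (g : Equiv.Perm (Fin n)) {S : Set (Fin n → ℝ)}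
    (hS : MeasurableSet S) : P n ((fun y => y ∘ g) ⁻¹' S) = P n S := by
  set e : Fin n ≃ Fin n := g.symm
  have mp : MeasurePreserving (MeasurableEquiv.piCongrLeft (fun _ : Fin n => ℝ) e)
      (P n) (P n) := measurePreserving_piCongrLeft (μ := fun _ : Fin n => ν) (α := fun _ : Fin n => ℝ) e
  have hco : ⇑(MeasurableEquiv.piCongrLeft (fun _ : Fin n => ℝ) e) = fun y => y ∘ g := by
    funext y
    funext b
    have := MeasurableEquiv.piCongrLeft_apply_apply (β := fun _ : Fin n => ℝ) e y (e.symm b)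
    rw [Equiv.apply_symm_apply] at this
    rw [this]
    simp [e, Function.comp]
  rw [← hco, mp.measure_preimage hS.nullMeasurableSet]

lemma P_SP_eq {n : ℕ} (g : Equiv.Perm (Fin n)) : P n (SP g) = P n (IncF n) := by
  have : SP g = (fun y => y ∘ g) ⁻¹' (IncF n) := by
    ext y; simp [SP, IncF, Function.comp]
  rw [this, P_comp_perm g (by rw [← SP_one]; exact measurable_SP 1)]

lemma SP_strictMono {n : ℕ} {g : Equiv.Perm (Fin n)} {y : Fin n → ℝ} (hy : y ∈ SP g) :
    StrictMono (y ∘ g) := fun a b hab => hy a b hab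

lemma strictMono_perm_eq_one {n : ℕ} (φ : Equiv.Perm (Fin n)) (h : StrictMono ⇑φ) : φ = 1 := by
  have hsym : StrictMono ⇑φ.symm := by
    intro a b hab
    rcases lt_trichotomy (φ.symm a) (φ.symm b) with hc | hc | hc
    · exact hc
    · have := congrArg φ hc
      simp only [Equiv.apply_symm_apply] at this
      exact absurd this hab.ne
    · have := h hc
      simp only [Equiv.apply_symm_apply] at this
      exact absurd hab (not_lt.2 this.le)
  haveI : WellFoundedLT (Fin n) := Finite.to_wellFoundedLT
  refine Equiv.ext fun a => ?_
  have h1 : φ a ≤ a := by simpa using hsym.le_apply (x := φ a)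
  have h2 : a ≤ φ a := h.le_apply
  simp [le_antisymm h1 h2]

lemma SP_pairwise_disjoint (n : ℕ) :
    Set.PairwiseDisjoint (↑(Finset.univ : Finset (Equiv.Perm (Fin n))) : Set (Equiv.Perm (Fin n))) SP := by
  intro g _ g' _ hgg'
  refine Set.disjoint_left.2 fun y hy hy' => hgg' ?_
  have hg := SP_strictMono hy
  have hg' := SP_strictMono hy'
  set φ : Equiv.Perm (Fin n) := g⁻¹ * g' with hφ
  have hmono : StrictMono ⇑φ := by
    intro a b hab
    have h1 : y (g' a) < y (g' b) := hy' a b hab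
    have e1 : g (φ a) = g' a := by simp [hφ]
    have e2 : g (φ b) = g' b := by simp [hφ]
    rcases lt_trichotomy (φ a) (φ b) with hc | hc | hc
    · exact hc
    · exfalso
      have : g' a = g' b := by rw [← e1, ← e2, hc]
      rw [this] at h1; exact lt_irrefl _ h1
    · exfalso
      have := hy _ _ hc
      rw [e1, e2] at this
      exact lt_irrefl _ (this.trans h1)
  have h1 : φ = 1 := strictMono_perm_eq_one φ hmono
  exact inv_mul_eq_one.mp h1

lemma SP_cover {n : ℕ} {y : Fin n → ℝ} (hy : y ∉ NonInj n) :
    ∃ g : Equiv.Perm (Fin n), y ∈ SP g := by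
  have hinj : Function.Injective y := by
    intro a b hab
    by_contra hne
    exact hy ⟨a, b, hne, hab⟩
  refine ⟨Tuple.sort y, fun a b hab => ?_⟩
  have hmono : Monotone (y ∘ Tuple.sort y) := Tuple.monotone_sort y
  have hsm : StrictMono (y ∘ Tuple.sort y) :=
    hmono.strictMono_of_injective (hinj.comp (Tuple.sort y).injective)
  exact hsm hab

lemma P_IncF (n : ℕ) : P n (IncF n) = ((n.factorial : ℝ≥0∞))⁻¹ := by
  classical
  have hsum : P n (⋃ g ∈ (Finset.univ : Finset (Equiv.Perm (Fin n))), SP g)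
      = (n.factorial : ℝ≥0∞) * P n (IncF n) := by
    rw [measure_biUnion_finset (SP_pairwise_disjoint n) (fun g _ => measurable_SP g)]
    simp only [fun g => P_SP_eq (n := n) g]
    rw [Finset.sum_const, Finset.card_univ, Fintype.card_perm]
    simp [nsmul_eq_mul]
  have hone : P n (⋃ g ∈ (Finset.univ : Finset (Equiv.Perm (Fin n))), SP g) = 1 := by
    have hco : (univ : Set (Fin n → ℝ)) ⊆
        (⋃ g ∈ (Finset.univ : Finset (Equiv.Perm (Fin n))), SP g) ∪ NonInj n := by
      intro y _
      by_cases hy : y ∈ NonInj n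
      · exact Or.inr hy
      · obtain ⟨g, hg⟩ := SP_cover hy
        exact Or.inl (Set.mem_biUnion (Finset.mem_univ g) hg)
    have h1 : (1 : ℝ≥0∞) ≤ P n (⋃ g ∈ (Finset.univ : Finset (Equiv.Perm (Fin n))), SP g) := by
      have := measure_mono (μ := P n) hco
      rw [measure_univ] at this
      calc (1:ℝ≥0∞) ≤ P n ((⋃ g ∈ (Finset.univ : Finset (Equiv.Perm (Fin n))), SP g) ∪ NonInj n) := this
      _ ≤ P n (⋃ g ∈ (Finset.univ : Finset (Equiv.Perm (Fin n))), SP g) + P n (NonInj n) := measure_union_le _ _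
      _ = P n (⋃ g ∈ (Finset.univ : Finset (Equiv.Perm (Fin n))), SP g) := by rw [noninj_null]; ring
    exact le_antisymm prob_le_one h1
  rw [hone] at hsum
  have hf0 : (n.factorial : ℝ≥0∞) ≠ 0 := by
    simp [Nat.factorial_ne_zero]
  have hftop : (n.factorial : ℝ≥0∞) ≠ ⊤ := ENNReal.natCast_ne_top _
  calc P n (IncF n) = ((n.factorial : ℝ≥0∞))⁻¹ * ((n.factorial : ℝ≥0∞) * P n (IncF n)) := by
        rw [← mul_assoc, ENNReal.inv_mul_cancel hf0 hftop, one_mul]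
    _ = ((n.factorial : ℝ≥0∞))⁻¹ := by rw [← hsum, mul_one]

lemma P_split (N K : ℕ) (S : Set (Fin N → ℝ)) (T : Set (Fin K → ℝ))
    (hS : MeasurableSet S) (hT : MeasurableSet T) :
    P (N + K) {y : Fin (N+K) → ℝ |
        (fun i : Fin N => y (Fin.castAdd K i)) ∈ S ∧ (fun t : Fin K => y (Fin.natAdd N t)) ∈ T}
      = P N S * P K T := by
  set e2 := MeasurableEquiv.sumPiEquivProdPi (fun _ : Fin N ⊕ Fin K => ℝ) with he2
  have mp2 : MeasurePreserving e2.symm ((P N).prod (P K))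
      (Measure.pi (fun _ : Fin N ⊕ Fin K => ν)) :=
    measurePreserving_sumPiEquivProdPi_symm (fun _ => ν)
  set e1 := MeasurableEquiv.piCongrLeft (fun _ : Fin (N+K) => ℝ) finSumFinEquiv with he1
  have mp1 : MeasurePreserving e1 (Measure.pi (fun _ : Fin N ⊕ Fin K => ν)) (P (N+K)) :=
    measurePreserving_piCongrLeft (μ := fun _ : Fin (N+K) => ν)
      (α := fun _ : Fin (N+K) => ℝ) finSumFinEquiv
  have mp := mp1.comp mp2
  have hU : MeasurableSet {y : Fin (N+K) → ℝ |
      (fun i : Fin N => y (Fin.castAdd K i)) ∈ S ∧ (fun t : Fin K => y (Fin.natAdd N t)) ∈ T} := by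
    refine MeasurableSet.inter ?_ ?_
    · exact (measurable_pi_iff.2 fun i => measurable_pi_apply _) hS
    · exact (measurable_pi_iff.2 fun i => measurable_pi_apply _) hT
  rw [← mp.measure_preimage hU.nullMeasurableSet]
  have hpre : (⇑e1 ∘ ⇑e2.symm) ⁻¹' {y : Fin (N+K) → ℝ |
      (fun i : Fin N => y (Fin.castAdd K i)) ∈ S ∧ (fun t : Fin K => y (Fin.natAdd N t)) ∈ T}
      = S ×ˢ T := by
    ext ⟨u, v⟩
    have key : ∀ (z : (Fin N ⊕ Fin K) → ℝ) (s : Fin N ⊕ Fin K),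
        e1 z (finSumFinEquiv s) = z s := fun z s =>
      MeasurableEquiv.piCongrLeft_apply_apply (β := fun _ : Fin (N+K) => ℝ) finSumFinEquiv z s
    have hz1 : ∀ i : Fin N, (e1 (e2.symm (u, v))) (Fin.castAdd K i) = u i := by
      intro i
      have : Fin.castAdd K i = finSumFinEquiv (Sum.inl i) := rfl
      rw [this, key]
      rfl
    have hz2 : ∀ t : Fin K, (e1 (e2.symm (u, v))) (Fin.natAdd N t) = v t := by
      intro t
      have : Fin.natAdd N t = finSumFinEquiv (Sum.inr t) := rfl
      rw [this, key]
      rfl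
    have hfun1 : (fun i : Fin N => e1 (e2.symm (u, v)) (Fin.castAdd K i)) = u := funext hz1
    have hfun2 : (fun t : Fin K => e1 (e2.symm (u, v)) (Fin.natAdd N t)) = v := funext hz2
    simp only [Set.mem_preimage, Function.comp_apply, Set.mem_setOf_eq, Set.mem_prod]
    rw [hfun1, hfun2]
  rw [hpre, Measure.prod_prod]

section Seq

def proj (n : ℕ) : (ℕ → ℝ) → (Fin n → ℝ) := fun x i => x i

lemma measurable_proj (n : ℕ) : Measurable (proj n) :=
  measurable_pi_iff.2 fun _ => measurable_pi_apply _

variable {μ : Measure (ℕ → ℝ)}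

lemma meas_eq (hμ : IsIIDUniform μ) {n : ℕ} {S : Set (Fin n → ℝ)} (hS : MeasurableSet S) :
    μ (proj n ⁻¹' S) = P n S := by
  rw [← Measure.map_apply (measurable_proj n) hS]
  exact congrFun (congrArg _ (hμ.2 n)) S

/-- the event that the first n values are strictly increasing -/
def Asc (n : ℕ) : Set (ℕ → ℝ) := {x | ∀ i j : ℕ, i < j → j < n → x i < x j}

lemma measurable_IncF (n : ℕ) : MeasurableSet (IncF n) := by
  rw [← SP_one]; exact measurable_SP 1

lemma Asc_eq (n : ℕ) : Asc n = proj n ⁻¹' (IncF n) := by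
  ext x
  simp only [Asc, Set.mem_setOf_eq, Set.mem_preimage, IncF, proj]
  constructor
  · intro h a b hab
    exact h a b hab b.isLt
  · intro h i j hij hj
    exact h ⟨i, lt_trans hij hj⟩ ⟨j, hj⟩ (by simpa [Fin.mk_lt_mk] using hij)

lemma measurable_Asc (n : ℕ) : MeasurableSet (Asc n) := by
  rw [Asc_eq]; exact measurable_proj n (measurable_IncF n)

lemma meas_Asc (hμ : IsIIDUniform μ) (n : ℕ) : μ (Asc n) = ((n.factorial : ℝ≥0∞))⁻¹ := by
  rw [Asc_eq, meas_eq hμ (measurable_IncF n), P_IncF]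

lemma Asc_antitone {n m : ℕ} (h : n ≤ m) : Asc m ⊆ Asc n :=
  fun x hx i j hij hj => hx i j hij (lt_of_lt_of_le hj h)

/-- the event that there is some descent -/
def Desc : Set (ℕ → ℝ) := {x | ∃ i : ℕ, x (i + 1) < x i}

lemma chain_lt {x : ℕ → ℝ} {n : ℕ} (hc : ∀ i, i + 1 < n → x i < x (i + 1)) :
    ∀ j, j < n → ∀ i, i < j → x i < x j := by
  intro j
  induction j with
  | zero => omega
  | succ j ih =>
    intro hj i hi
    rcases Nat.lt_or_ge i j with hij | hij
    · exact (ih (by omega) i hij).trans (hc j hj)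
    · have : i = j := by omega
      subst this
      exact hc i hj

lemma chain_le {x : ℕ → ℝ} (hc : ∀ i, x i ≤ x (i + 1)) :
    ∀ j, ∀ i, i < j → x i ≤ x j := by
  intro j
  induction j with
  | zero => omega
  | succ j ih =>
    intro i hi
    rcases Nat.lt_or_ge i j with hij | hij
    · exact (ih i hij).trans (hc j)
    · have : i = j := by omega
      subst this
      exact hc i

lemma desc_compl_null (hμ : IsIIDUniform μ) : μ Descᶜ = 0 := by
  have hsub : ∀ n : ℕ, Descᶜ ⊆ proj n ⁻¹' {y : Fin n → ℝ | ∀ a b : Fin n, a < b → y a ≤ y b} := by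
    intro n x hx a b hab
    have hc : ∀ i : ℕ, x i ≤ x (i + 1) := by
      intro i
      by_contra hlt
      exact hx ⟨i, lt_of_not_ge hlt⟩
    exact chain_le hc b a hab
  have hWsub : ∀ n : ℕ, {y : Fin n → ℝ | ∀ a b : Fin n, a < b → y a ≤ y b} ⊆
      IncF n ∪ NonInj n := by
    intro n y hy
    by_cases hni : y ∈ NonInj n
    · exact Or.inr hni
    · refine Or.inl fun a b hab => lt_of_le_of_ne (hy a b hab) ?_
      intro he
      exact hni ⟨a, b, ne_of_lt hab, he⟩
  have hW : ∀ n : ℕ, MeasurableSet {y : Fin n → ℝ | ∀ a b : Fin n, a < b → y a ≤ y b} := by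
    intro n
    have : {y : Fin n → ℝ | ∀ a b : Fin n, a < b → y a ≤ y b} =
        ⋂ (a : Fin n) (b : Fin n) (_ : a < b), {y : Fin n → ℝ | y a ≤ y b} := by
      ext y; simp
    rw [this]
    exact MeasurableSet.iInter fun a => MeasurableSet.iInter fun b => MeasurableSet.iInter
      fun _ => measurableSet_le (measurable_pi_apply _) (measurable_pi_apply _)
  have hbound : ∀ n : ℕ, μ Descᶜ ≤ ((n : ℝ≥0∞))⁻¹ := by
    intro n
    calc μ Descᶜ ≤ μ (proj n ⁻¹' {y : Fin n → ℝ | ∀ a b : Fin n, a < b → y a ≤ y b}) :=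
          measure_mono (hsub n)
      _ = P n {y : Fin n → ℝ | ∀ a b : Fin n, a < b → y a ≤ y b} := meas_eq hμ (hW n)
      _ ≤ P n (IncF n ∪ NonInj n) := measure_mono (hWsub n)
      _ ≤ P n (IncF n) + P n (NonInj n) := measure_union_le _ _
      _ = ((n.factorial : ℝ≥0∞))⁻¹ := by rw [P_IncF, noninj_null, add_zero]
      _ ≤ ((n : ℝ≥0∞))⁻¹ := by
          apply ENNReal.inv_le_inv.2
          exact_mod_cast Nat.cast_le.2 n.self_le_factorial
  have h0 : μ Descᶜ ≤ 0 :=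
    ge_of_tendsto' ENNReal.tendsto_inv_nat_nhds_zero hbound
  exact le_antisymm h0 zero_le

/-- pairwise distinct values -/
def Dist : Set (ℕ → ℝ) := {x : ℕ → ℝ | ∀ i j : ℕ, i ≠ j → x i ≠ x j}

lemma dist_compl_null (hμ : IsIIDUniform μ) : μ Distᶜ = 0 := by
  have : Distᶜ ⊆ ⋃ (p : ℕ × ℕ), {x : ℕ → ℝ | p.1 ≠ p.2 ∧ x p.1 = x p.2} := by
    intro x hx
    simp only [Dist, Set.mem_compl_iff, Set.mem_setOf_eq] at hx
    push_neg at hx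
    obtain ⟨i, j, hij, he⟩ := hx
    exact Set.mem_iUnion.2 ⟨(i, j), hij, he⟩
  refine measure_mono_null this (measure_iUnion_null fun p => ?_)
  by_cases hp : p.1 = p.2
  · simp [hp]
  · set n := max p.1 p.2 + 1 with hn
    have h1 : p.1 < n := by omega
    have h2 : p.2 < n := by omega
    have hsub : {x : ℕ → ℝ | p.1 ≠ p.2 ∧ x p.1 = x p.2} ⊆
        proj n ⁻¹' {y : Fin n → ℝ | y ⟨p.1, h1⟩ = y ⟨p.2, h2⟩} := by
      intro x hx
      exact hx.2
    refine measure_mono_null hsub ?_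
    rw [meas_eq hμ (measurableSet_eq_fun (measurable_pi_apply _) (measurable_pi_apply _))]
    exact pair_null (by simp [Fin.mk.injEq, hp])

/-- ascending window of length K at position i -/
def AscWin (K : ℕ) (x : ℕ → ℝ) (i : ℕ) : Prop :=
  ∀ a b : Fin K, a < b → x (i + a) < x (i + b)

lemma occurs_one_iff {K : ℕ} (x : ℕ → ℝ) (i : ℕ) :
    OccursAt (1 : Equiv.Perm (Fin K)) x i ↔ AscWin K x i := by
  constructor
  · intro h a b hab
    exact (h a b).2 (by simpa using hab)
  · intro h a b
    simp only [Equiv.Perm.coe_one, id_eq]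
    constructor
    · intro hlt
      rcases lt_trichotomy a b with hc | hc | hc
      · exact hc
      · subst hc; exact absurd hlt (lt_irrefl _)
      · exact absurd (h b a hc) (not_lt_of_gt hlt)
    · exact h a b

lemma occurs_tau_iff {τ : Equiv.Perm (Fin 2)} (hτ : τ 0 = 1 ∧ τ 1 = 0) (x : ℕ → ℝ) (i : ℕ) :
    OccursAt τ x i ↔ x (i + 1) < x i := by
  constructor
  · intro h
    have := (h 1 0).2 (by rw [hτ.1, hτ.2]; decide)
    simpa using this
  · intro h
    unfold OccursAt
    rw [Fin.forall_fin_two]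
    constructor <;> rw [Fin.forall_fin_two] <;>
      simp only [hτ.1, hτ.2, Fin.val_zero, Fin.val_one, add_zero]
    · exact ⟨iff_of_false (lt_irrefl _) (by decide),
        iff_of_false (not_lt_of_gt h) (by decide)⟩
    · exact ⟨iff_of_true h (by decide), iff_of_false (lt_irrefl _) (by decide)⟩

section HitTime

variable {K : ℕ} (σ : Equiv.Perm (Fin K))

lemma measurable_occursAt (i : ℕ) : MeasurableSet {x : ℕ → ℝ | OccursAt σ x i} := by
  have : {x : ℕ → ℝ | OccursAt σ x i} =
      ⋂ (a : Fin K) (b : Fin K), {x : ℕ → ℝ | x (i + a) < x (i + b) ↔ σ a < σ b} := by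
    ext x; simp [OccursAt]
  rw [this]
  refine MeasurableSet.iInter fun a => MeasurableSet.iInter fun b => ?_
  by_cases hab : σ a < σ b
  · have : {x : ℕ → ℝ | x (i + a) < x (i + b) ↔ σ a < σ b} =
        {x : ℕ → ℝ | x (i + a) < x (i + b)} := by
      ext x; simp [hab]
    rw [this]
    exact measurableSet_lt (measurable_pi_apply _) (measurable_pi_apply _)
  · have hm : MeasurableSet {x : ℕ → ℝ | x (i + a) < x (i + b)} :=
      measurableSet_lt (measurable_pi_apply _) (measurable_pi_apply _)
    have : {x : ℕ → ℝ | x (i + a) < x (i + b) ↔ σ a < σ b} =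
        {x : ℕ → ℝ | x (i + a) < x (i + b)}ᶜ := by
      ext x; simp [hab]
    rw [this]
    exact hm.compl

lemma measurable_hitTime (hK : 1 ≤ K) : Measurable (hitTime σ) := by
  have hQ : ∀ j : ℕ, MeasurableSet {x : ℕ → ℝ | K ≤ j ∧ OccursAt σ x (j - K)} := by
    intro j
    by_cases hj : K ≤ j
    · have : {x : ℕ → ℝ | K ≤ j ∧ OccursAt σ x (j - K)} = {x : ℕ → ℝ | OccursAt σ x (j - K)} := by
        ext x; simp [hj]
      rw [this]; exact measurable_occursAt σ _
    · have : {x : ℕ → ℝ | K ≤ j ∧ OccursAt σ x (j - K)} = ∅ := by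
        ext x; simp [hj]
      rw [this]; exact MeasurableSet.empty
  refine measurable_to_countable' fun n => ?_
  match n with
  | 0 =>
    have : hitTime σ ⁻¹' {0} = ⋂ j : ℕ, {x : ℕ → ℝ | K ≤ j ∧ OccursAt σ x (j - K)}ᶜ := by
      ext x
      simp only [Set.mem_preimage, Set.mem_singleton_iff, Set.mem_iInter, Set.mem_compl_iff,
        Set.mem_setOf_eq]
      constructor
      · intro h0 j hj
        have hne : {j | K ≤ j ∧ OccursAt σ x (j - K)}.Nonempty := ⟨j, hj⟩
        have := Nat.sInf_mem hne
        rw [show sInf {j | K ≤ j ∧ OccursAt σ x (j - K)} = hitTime σ x from rfl, h0] at this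
        exact absurd this.1 (by omega)
      · intro h
        have : {j | K ≤ j ∧ OccursAt σ x (j - K)} = ∅ := by
          ext j; simpa using h j
        rw [hitTime, this, Nat.sInf_empty]
    rw [this]
    exact MeasurableSet.iInter fun j => (hQ j).compl
  | (n+1) =>
    have : hitTime σ ⁻¹' {n+1} = {x : ℕ → ℝ | K ≤ n+1 ∧ OccursAt σ x (n+1 - K)} ∩
        ⋂ (j : ℕ) (_ : j < n+1), {x : ℕ → ℝ | K ≤ j ∧ OccursAt σ x (j - K)}ᶜ := by
      ext x
      simp only [Set.mem_preimage, Set.mem_singleton_iff, Set.mem_inter_iff, Set.mem_iInter,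
        Set.mem_compl_iff, Set.mem_setOf_eq]
      constructor
      · intro h0
        have hne : {j | K ≤ j ∧ OccursAt σ x (j - K)}.Nonempty := by
          by_contra hemp
          rw [Set.not_nonempty_iff_eq_empty] at hemp
          rw [hitTime, hemp, Nat.sInf_empty] at h0
          omega
        have hmem := Nat.sInf_mem hne
        rw [show sInf {j | K ≤ j ∧ OccursAt σ x (j - K)} = hitTime σ x from rfl, h0] at hmem
        refine ⟨hmem, fun j hj hbad => ?_⟩
        have := Nat.sInf_le (s := {j | K ≤ j ∧ OccursAt σ x (j - K)}) hbad
        rw [show sInf {j | K ≤ j ∧ OccursAt σ x (j - K)} = hitTime σ x from rfl, h0] at this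
        omega
      · rintro ⟨hmem, hmin⟩
        have h1 : hitTime σ x ≤ n+1 := Nat.sInf_le hmem
        have h2 : ¬ hitTime σ x < n+1 := by
          intro hlt
          have hne : {j | K ≤ j ∧ OccursAt σ x (j - K)}.Nonempty := ⟨n+1, hmem⟩
          exact hmin _ hlt (Nat.sInf_mem hne)
        omega
    rw [this]
    exact (hQ (n+1)).inter (MeasurableSet.iInter fun j => MeasurableSet.iInter fun _ => (hQ j).compl)

lemma hitTime_le {x : ℕ → ℝ} {j : ℕ} (hj : K ≤ j) (ho : OccursAt σ x (j - K)) :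
    hitTime σ x ≤ j := Nat.sInf_le ⟨hj, ho⟩

end HitTime

section Blocks

lemma bnd {k j m : ℕ} (hj : j < m) (a : Fin k) : j * k + (a : ℕ) < m * k := by
  have h1 : (a : ℕ) < k := a.isLt
  have h2 : (j + 1) * k ≤ m * k := Nat.mul_le_mul_right k (by omega)
  have h3 : (j + 1) * k = j * k + k := by ring
  omega

def Sm (k m : ℕ) : Set (Fin (m * k) → ℝ) :=
  {y | ∀ j, ∀ hj : j < m,
    ¬ ∀ a b : Fin k, a < b → y ⟨j * k + a, bnd hj a⟩ < y ⟨j * k + b, bnd hj b⟩}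

lemma measurable_Sm (k m : ℕ) : MeasurableSet (Sm k m) := by
  have : Sm k m = ⋂ (j : ℕ) (hj : j < m),
      (⋂ (a : Fin k) (b : Fin k) (_ : a < b),
        {y : Fin (m * k) → ℝ | y ⟨j * k + a, bnd hj a⟩ < y ⟨j * k + b, bnd hj b⟩})ᶜ := by
    ext y
    simp only [Sm, Set.mem_setOf_eq, Set.mem_iInter, Set.mem_compl_iff]
  rw [this]
  refine MeasurableSet.iInter fun j => MeasurableSet.iInter fun hj => MeasurableSet.compl ?_
  exact MeasurableSet.iInter fun a => MeasurableSet.iInter fun b => MeasurableSet.iInter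
    fun _ => measurableSet_lt (measurable_pi_apply _) (measurable_pi_apply _)

def Bq (k m : ℕ) : Set (ℕ → ℝ) := {x | ∀ j, j < m → ¬ AscWin k x (j * k)}

lemma Bq_eq (k m : ℕ) : Bq k m = proj (m * k) ⁻¹' Sm k m := rfl

variable {μ : Measure (ℕ → ℝ)}

lemma cyl (hμ : IsIIDUniform μ) {N K : ℕ} {S : Set (Fin N → ℝ)} {T : Set (Fin K → ℝ)}
    (hS : MeasurableSet S) (hT : MeasurableSet T) :
    μ ((proj N ⁻¹' S) ∩ {x | (fun t : Fin K => x (N + t)) ∈ T}) = P N S * P K T := by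
  have hU : MeasurableSet {y : Fin (N+K) → ℝ |
      (fun i : Fin N => y (Fin.castAdd K i)) ∈ S ∧ (fun t : Fin K => y (Fin.natAdd N t)) ∈ T} := by
    refine MeasurableSet.inter ?_ ?_
    · exact (measurable_pi_iff.2 fun i => measurable_pi_apply _) hS
    · exact (measurable_pi_iff.2 fun i => measurable_pi_apply _) hT
  have hset : (proj N ⁻¹' S) ∩ {x | (fun t : Fin K => x (N + t)) ∈ T} =
      proj (N + K) ⁻¹' {y : Fin (N+K) → ℝ |
        (fun i : Fin N => y (Fin.castAdd K i)) ∈ S ∧ (fun t : Fin K => y (Fin.natAdd N t)) ∈ T} :=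
    rfl
  rw [hset, meas_eq hμ hU, P_split N K S T hS hT]

lemma Bq_succ (k m : ℕ) :
    Bq k (m + 1) = (proj (m * k) ⁻¹' Sm k m) ∩
      {x | (fun t : Fin k => x (m * k + t)) ∈ (IncF k)ᶜ} := by
  rw [← Bq_eq]
  ext x
  simp only [Bq, Set.mem_setOf_eq, Set.mem_inter_iff, Set.mem_compl_iff, IncF, AscWin]
  constructor
  · intro h
    exact ⟨fun j hj => h j (by omega), h m (by omega)⟩
  · rintro ⟨h1, h2⟩ j hj
    rcases Nat.lt_or_ge j m with hjm | hjm
    · exact h1 j hjm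
    · have : j = m := by omega
      subst this
      exact h2

lemma meas_Bq (hμ : IsIIDUniform μ) (k m : ℕ) :
    μ (Bq k m) = (P k (IncF k)ᶜ) ^ m := by
  induction m with
  | zero =>
    haveI := hμ.1
    have : Bq k 0 = Set.univ := by
      ext x; simp [Bq]
    rw [this, pow_zero, measure_univ]
  | succ m ih =>
    rw [Bq_succ, cyl hμ (measurable_Sm k m) (measurable_IncF k).compl,
        ← meas_eq hμ (measurable_Sm k m), ← Bq_eq, ih, pow_succ]

lemma E_null (hμ : IsIIDUniform μ) (k : ℕ) (hk1 : 1 ≤ k) :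
    μ {x : ℕ → ℝ | ∀ i, ¬ OccursAt (1 : Equiv.Perm (Fin k)) x i} = 0 := by
  set q := P k (IncF k)ᶜ with hq
  have hqlt : q < 1 := by
    have hcompl : q = 1 - P k (IncF k) := by
      rw [hq, measure_compl (measurable_IncF k) (measure_ne_top _ _), measure_univ]
    rw [hcompl, P_IncF]
    refine ENNReal.sub_lt_self ENNReal.one_ne_top one_ne_zero ?_
    simp [ENNReal.inv_ne_zero]
  have hsub : ∀ m : ℕ, {x : ℕ → ℝ | ∀ i, ¬ OccursAt (1 : Equiv.Perm (Fin k)) x i} ⊆ Bq k m := by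
    intro m x hx j hj hbad
    exact hx (j * k) ((occurs_one_iff x (j * k)).2 hbad)
  have hbound : ∀ m : ℕ, μ {x : ℕ → ℝ | ∀ i, ¬ OccursAt (1 : Equiv.Perm (Fin k)) x i} ≤ q ^ m :=
    fun m => le_trans (measure_mono (hsub m)) (le_of_eq (meas_Bq hμ k m))
  have h0 := ge_of_tendsto' (ENNReal.tendsto_pow_atTop_nhds_zero_of_lt_one hqlt) hbound
  exact le_antisymm h0 zero_le

end Blocks

section Hit

/-- index of the first descent -/
def dIdx (x : ℕ → ℝ) : ℕ := sInf {i | x (i + 1) < x i}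

lemma dIdx_desc {x : ℕ → ℝ} (hx : x ∈ Desc) : x (dIdx x + 1) < x (dIdx x) :=
  Nat.sInf_mem hx

lemma hitTime_tau_eq {τ : Equiv.Perm (Fin 2)} (hτ : τ 0 = 1 ∧ τ 1 = 0) {x : ℕ → ℝ}
    (hx : x ∈ Desc) : hitTime τ x = dIdx x + 2 := by
  have hd := dIdx_desc hx
  refine le_antisymm ?_ ?_
  · refine hitTime_le τ (by omega) ?_
    rw [show dIdx x + 2 - 2 = dIdx x by omega]
    exact (occurs_tau_iff hτ x _).2 hd
  · have hne : {j | 2 ≤ j ∧ OccursAt τ x (j - 2)}.Nonempty :=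
      ⟨dIdx x + 2, by omega, by
        rw [show dIdx x + 2 - 2 = dIdx x by omega]
        exact (occurs_tau_iff hτ x _).2 hd⟩
    have hmem := Nat.sInf_mem hne
    have hdesc : x (hitTime τ x - 2 + 1) < x (hitTime τ x - 2) :=
      (occurs_tau_iff hτ x _).1 hmem.2
    have hge : dIdx x ≤ hitTime τ x - 2 := Nat.sInf_le hdesc
    have h2 : 2 ≤ hitTime τ x := hmem.1
    omega

lemma ascWin_zero_iff {k : ℕ} (x : ℕ → ℝ) : AscWin k x 0 ↔ x ∈ Asc k := by
  constructor
  · intro h i j hij hj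
    have := h ⟨i, lt_trans hij hj⟩ ⟨j, hj⟩ (by simpa [Fin.mk_lt_mk] using hij)
    simpa using this
  · intro h a b hab
    simpa using h a b hab b.isLt

lemma hitTime_one_asc {k : ℕ} (hk1 : 1 ≤ k) {x : ℕ → ℝ} (hx : x ∈ Asc k) :
    hitTime (1 : Equiv.Perm (Fin k)) x = k := by
  have hocc : OccursAt (1 : Equiv.Perm (Fin k)) x (k - k) := by
    rw [Nat.sub_self]
    exact (occurs_one_iff x 0).2 ((ascWin_zero_iff x).2 hx)
  refine le_antisymm (hitTime_le _ le_rfl hocc) ?_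
  have hne : {j | k ≤ j ∧ OccursAt (1 : Equiv.Perm (Fin k)) x (j - k)}.Nonempty :=
    ⟨k, le_rfl, hocc⟩
  exact (Nat.sInf_mem hne).1

lemma hitTime_one_lower {k : ℕ} (hk1 : 1 ≤ k) {x : ℕ → ℝ} (hx : x ∉ Asc k)
    (hxE : ∃ i, OccursAt (1 : Equiv.Perm (Fin k)) x i) :
    k + 1 ≤ hitTime (1 : Equiv.Perm (Fin k)) x := by
  obtain ⟨i0, hi0⟩ := hxE
  have hne : {j | k ≤ j ∧ OccursAt (1 : Equiv.Perm (Fin k)) x (j - k)}.Nonempty :=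
    ⟨i0 + k, by omega, by rw [Nat.add_sub_cancel]; exact hi0⟩
  have hmem := Nat.sInf_mem hne
  have hk_le : k ≤ hitTime (1 : Equiv.Perm (Fin k)) x := hmem.1
  rcases Nat.lt_or_ge k (hitTime (1 : Equiv.Perm (Fin k)) x) with h | h
  · omega
  · exfalso
    have heq : hitTime (1 : Equiv.Perm (Fin k)) x = k := by omega
    have := hmem.2
    have hfold : sInf {j | k ≤ j ∧ OccursAt (1 : Equiv.Perm (Fin k)) x (j - k)} =
        hitTime (1 : Equiv.Perm (Fin k)) x := rfl
    rw [hfold, heq, Nat.sub_self] at this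
    exact hx ((ascWin_zero_iff x).1 ((occurs_one_iff x 0).1 this))

lemma asc_mem_iff {x : ℕ → ℝ} (hxd : x ∈ Desc) (hdist : x ∈ Dist) {n : ℕ} (hn : 1 ≤ n) :
    x ∈ Asc n ↔ n ≤ dIdx x + 1 := by
  constructor
  · intro h
    by_contra hlt
    have hd : dIdx x + 1 < n := by omega
    exact absurd (h (dIdx x) (dIdx x + 1) (by omega) hd) (not_lt_of_gt (dIdx_desc hxd))
  · intro h i j hij hj
    have hc : ∀ i, i + 1 < n → x i < x (i + 1) := by
      intro i hi
      have hnotdesc : i ∉ {i | x (i + 1) < x i} := Nat.notMem_of_lt_sInf (by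
        change i < dIdx x
        omega)
      simp only [Set.mem_setOf_eq] at hnotdesc
      exact lt_of_le_of_ne (le_of_not_gt hnotdesc) (hdist i (i + 1) (by omega))
    exact chain_lt hc j hj i hij

end Hit

lemma tsum_ite_lt (c : ℕ) : ∑' m : ℕ, (if m < c then (1 : ℝ≥0∞) else 0) = c := by
  rw [tsum_eq_sum (s := Finset.range c) (fun m hm => by
    rw [Finset.mem_range] at hm; simp [hm])]
  have hco : ∀ m ∈ Finset.range c, (if m < c then (1 : ℝ≥0∞) else 0) = 1 := fun m hm => by
    rw [Finset.mem_range] at hm; simp [hm]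
  rw [Finset.sum_congr rfl hco, Finset.sum_const, Finset.card_range, nsmul_eq_mul, mul_one]

variable {μ : Measure (ℕ → ℝ)}

lemma summable_r (k : ℕ) : Summable (fun n : ℕ => 1 / (n.factorial : ℝ)) := by
  have := Real.summable_pow_div_factorial 1
  simpa using this

lemma tail_sum (k : ℕ) :
    ∑' m : ℕ, 1 / ((m + k).factorial : ℝ) =
      Real.exp 1 - ∑ i ∈ Finset.range k, 1 / (i.factorial : ℝ) := by
  have hsum := summable_r k
  have h1 := Summable.sum_add_tsum_nat_add (f := fun n : ℕ => 1 / (n.factorial : ℝ)) k hsum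
  have hexp : ∑' n : ℕ, 1 / (n.factorial : ℝ) = Real.exp 1 := by
    rw [Real.exp_eq_exp_ℝ]
    have h2 := (NormedSpace.expSeries_div_hasSum_exp (1 : ℝ)).tsum_eq
    rw [← h2]
    exact tsum_congr fun n => by rw [one_pow]
  rw [hexp] at h1
  linarith

theorem main_result (hμ : IsIIDUniform μ)
    (k : ℕ) (hk : 2 ≤ k) (τ : Equiv.Perm (Fin 2)) (hτ : τ 0 = 1 ∧ τ 1 = 0) :
    (1 / (μ {x | hitTime (1 : Equiv.Perm (Fin k)) x < hitTime τ x}).toReal) *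
        ∫ x in {x | hitTime (1 : Equiv.Perm (Fin k)) x < hitTime τ x},
          ((hitTime τ x : ℝ) - (hitTime (1 : Equiv.Perm (Fin k)) x : ℝ)) ∂μ =
      (k.factorial : ℝ) * (Real.exp 1 - ∑ i ∈ Finset.range k, 1 / (i.factorial : ℝ)) := by
  classical
  haveI := hμ.1
  have hk1 : 1 ≤ k := by omega
  set A := {x : ℕ → ℝ | hitTime (1 : Equiv.Perm (Fin k)) x < hitTime τ x} with hAdef
  set EE := {x : ℕ → ℝ | ∀ i, ¬ OccursAt (1 : Equiv.Perm (Fin k)) x i} with hEEdef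
  set Z := Distᶜ ∪ EE ∪ Descᶜ with hZdef
  have hmT1 : Measurable (hitTime (1 : Equiv.Perm (Fin k))) := measurable_hitTime _ hk1
  have hmT2 : Measurable (hitTime τ) := measurable_hitTime τ (by omega)
  have hA : MeasurableSet A := by
    have heq : A = (fun x => (hitTime (1 : Equiv.Perm (Fin k)) x, hitTime τ x)) ⁻¹'
        {p : ℕ × ℕ | p.1 < p.2} := rfl
    rw [heq]
    exact (hmT1.prodMk hmT2) ((Set.to_countable _).measurableSet)
  have hZ : μ Z = 0 := by
    rw [hZdef]
    refine measure_union_null (measure_union_null ?_ ?_) ?_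
    · exact dist_compl_null hμ
    · exact E_null hμ k hk1
    · exact desc_compl_null hμ
  -- pointwise facts off Z
  have hfacts : ∀ x : ℕ → ℝ, x ∉ Z →
      (x ∈ A ↔ x ∈ Asc k) ∧
      (x ∈ Asc k → ∀ m : ℕ, (x ∈ Asc (k + m) ↔
        m < hitTime τ x - hitTime (1 : Equiv.Perm (Fin k)) x)) := by
    intro x hx
    rw [hZdef] at hx
    simp only [Set.mem_union, Set.mem_compl_iff, not_or, not_not] at hx
    obtain ⟨⟨hdist, hEE⟩, hdesc⟩ := hx
    have hocc : ∃ i, OccursAt (1 : Equiv.Perm (Fin k)) x i := by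
      by_contra hno
      push_neg at hno
      exact hEE hno
    have hfact1 : x ∈ A ↔ x ∈ Asc k := by
      constructor
      · intro hxa
        by_contra hnasc
        have hT1 : k + 1 ≤ hitTime (1 : Equiv.Perm (Fin k)) x :=
          hitTime_one_lower hk1 hnasc hocc
        have hT2 : hitTime τ x = dIdx x + 2 := hitTime_tau_eq hτ hdesc
        have hdlt : ¬ (k ≤ dIdx x + 1) := fun hc =>
          hnasc ((asc_mem_iff hdesc hdist hk1).2 hc)
        have : hitTime τ x ≤ k := by omega
        have := hAdef ▸ hxa
        simp only [Set.mem_setOf_eq] at this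
        omega
      · intro hxasc
        have hT1 : hitTime (1 : Equiv.Perm (Fin k)) x = k := hitTime_one_asc hk1 hxasc
        have hT2 : hitTime τ x = dIdx x + 2 := hitTime_tau_eq hτ hdesc
        have hd : k ≤ dIdx x + 1 := (asc_mem_iff hdesc hdist hk1).1 hxasc
        simp only [hAdef, Set.mem_setOf_eq]
        omega
    refine ⟨hfact1, fun hxasc m => ?_⟩
    have hT1 : hitTime (1 : Equiv.Perm (Fin k)) x = k := hitTime_one_asc hk1 hxasc
    have hT2 : hitTime τ x = dIdx x + 2 := hitTime_tau_eq hτ hdesc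
    have hd : k ≤ dIdx x + 1 := (asc_mem_iff hdesc hdist hk1).1 hxasc
    rw [asc_mem_iff hdesc hdist (by omega)]
    omega
  -- measure of A
  have hmuA : μ A = ((k.factorial : ℝ≥0∞))⁻¹ := by
    have h1 : A ⊆ Asc k ∪ Z := by
      intro x hx
      by_cases hz : x ∈ Z
      · exact Or.inr hz
      · exact Or.inl ((hfacts x hz).1.1 hx)
    have h2 : Asc k ⊆ A ∪ Z := by
      intro x hx
      by_cases hz : x ∈ Z
      · exact Or.inr hz
      · exact Or.inl ((hfacts x hz).1.2 hx)
    have hle1 : μ A ≤ μ (Asc k) :=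
      calc μ A ≤ μ (Asc k ∪ Z) := measure_mono h1
        _ ≤ μ (Asc k) + μ Z := measure_union_le _ _
        _ = μ (Asc k) := by rw [hZ, add_zero]
    have hle2 : μ (Asc k) ≤ μ A :=
      calc μ (Asc k) ≤ μ (A ∪ Z) := measure_mono h2
        _ ≤ μ A + μ Z := measure_union_le _ _
        _ = μ A := by rw [hZ, add_zero]
    rw [le_antisymm hle1 hle2, meas_Asc hμ]
  -- the integral
  set f : (ℕ → ℝ) → ℝ := fun x =>
    ((hitTime τ x : ℝ) - (hitTime (1 : Equiv.Perm (Fin k)) x : ℝ)) with hfdef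
  have hFnn : ∀ x, 0 ≤ A.indicator f x := by
    intro x
    by_cases hx : x ∈ A
    · rw [Set.indicator_of_mem hx]
      have : hitTime (1 : Equiv.Perm (Fin k)) x < hitTime τ x := hx
      simp only [hfdef, sub_nonneg]
      exact_mod_cast this.le
    · rw [Set.indicator_of_notMem hx]
  have hFmeas : Measurable (A.indicator f) := by
    refine Measurable.indicator ?_ hA
    exact (measurable_from_nat.comp hmT2).sub (measurable_from_nat.comp hmT1)
  have hint : ∫ x in A, f x ∂μ = (∫⁻ x, ENNReal.ofReal (A.indicator f x) ∂μ).toReal := by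
    rw [← integral_indicator hA]
    exact integral_eq_lintegral_of_nonneg_ae (ae_of_all μ hFnn) hFmeas.aestronglyMeasurable
  -- identify the lintegral
  have hae : (fun x => ENNReal.ofReal (A.indicator f x)) =ᵐ[μ]
      (fun x => ∑' m : ℕ, Set.indicator (Asc (k + m)) (fun _ => (1 : ℝ≥0∞)) x) := by
    have hZae : ∀ᵐ x ∂μ, x ∉ Z := by
      rw [ae_iff]
      simpa [not_not] using hZ
    filter_upwards [hZae] with x hx
    obtain ⟨hf1, hf2⟩ := hfacts x hx
    by_cases hxasc : x ∈ Asc k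
    · have hxa : x ∈ A := hf1.2 hxasc
      have hlt : hitTime (1 : Equiv.Perm (Fin k)) x < hitTime τ x := hxa
      set c := hitTime τ x - hitTime (1 : Equiv.Perm (Fin k)) x with hcdef
      have hfx : A.indicator f x = (c : ℝ) := by
        rw [Set.indicator_of_mem hxa]
        exact (Nat.cast_sub hlt.le).symm
      rw [hfx, ENNReal.ofReal_natCast]
      have hind : ∀ m : ℕ, Set.indicator (Asc (k + m)) (fun _ => (1 : ℝ≥0∞)) x =
          if m < c then 1 else 0 := by
        intro m
        by_cases hm : x ∈ Asc (k + m)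
        · rw [Set.indicator_of_mem hm, if_pos ((hf2 hxasc m).1 hm)]
        · rw [Set.indicator_of_notMem hm, if_neg (fun hc => hm ((hf2 hxasc m).2 hc))]
      rw [tsum_congr hind, tsum_ite_lt]
    · have hxa : x ∉ A := fun h => hxasc (hf1.1 h)
      rw [Set.indicator_of_notMem hxa, ENNReal.ofReal_zero]
      have hind : ∀ m : ℕ, Set.indicator (Asc (k + m)) (fun _ => (1 : ℝ≥0∞)) x = 0 := by
        intro m
        exact Set.indicator_of_notMem
          (fun hc => hxasc (Asc_antitone (Nat.le_add_right k m) hc)) _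
      rw [tsum_congr hind, tsum_zero]
  have hlin : ∫⁻ x, ENNReal.ofReal (A.indicator f x) ∂μ = ∑' m : ℕ, μ (Asc (k + m)) := by
    rw [lintegral_congr_ae hae,
      lintegral_tsum (fun m => ((measurable_const.indicator (measurable_Asc (k + m))).aemeasurable))]
    exact tsum_congr fun m => lintegral_indicator_one (measurable_Asc (k + m))
  have hval : ∀ m : ℕ, μ (Asc (k + m)) = ENNReal.ofReal (1 / (((m + k).factorial : ℝ))) := by
    intro m
    rw [meas_Asc hμ, add_comm k m, one_div,
      ENNReal.ofReal_inv_of_pos (by positivity), ENNReal.ofReal_natCast]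
  have hrsum : Summable (fun m : ℕ => 1 / (((m + k).factorial : ℝ))) :=
    (summable_nat_add_iff k).mpr (summable_r 0)
  rw [hint, hlin, tsum_congr hval,
    ← ENNReal.ofReal_tsum_of_nonneg (fun m => by positivity) hrsum,
    ENNReal.toReal_ofReal (tsum_nonneg (fun m => by positivity)),
    tail_sum k, hmuA, ENNReal.toReal_inv]
  have hcast : ((k.factorial : ℝ≥0∞)).toReal = (k.factorial : ℝ) := by simp
  rw [hcast, one_div, inv_inv]

end Seq

end CondExpAux

theorem cond_exp_F_iota_to_21 (μ : Measure (ℕ → ℝ)) (hμ : IsIIDUniform μ)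
    (k : ℕ) (hk : 2 ≤ k) (τ : Equiv.Perm (Fin 2)) (hτ : τ 0 = 1 ∧ τ 1 = 0) :
    (1 / (μ {x | hitTime (1 : Equiv.Perm (Fin k)) x < hitTime τ x}).toReal) *
        ∫ x in {x | hitTime (1 : Equiv.Perm (Fin k)) x < hitTime τ x},
          ((hitTime τ x : ℝ) - (hitTime (1 : Equiv.Perm (Fin k)) x : ℝ)) ∂μ =
      (k.factorial : ℝ) * (Real.exp 1 - ∑ i ∈ Finset.range k, 1 / (i.factorial : ℝ)) :=
  CondExpAux.main_result hμ k hk τ hτ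

end
end
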